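/- arXiv:2502.14655 — 5 statements merged into one kernel-verified Lean document; each statement's English description precedes it below -/
import Mathlib

section
/- Let N ≥ 1, p ∈ [1,∞), and let (ρ_t)_{t∈(0,1)} be non-negative functions in L¹_loc(ℝ^N). Assume there exist C > 0 and a measurable function κ : ℝ^N → [0,∞] such that ρ_t(z)/|z|^p ≤ C κ(z) for all t ∈ (0,1) and a.e. z ∈ ℝ^N, and lim_{t→0⁺} ρ_t(z)/|z|^p = κ(z) for a.e. z ∈ ℝ^N. Then: (i) for every u ∈ W^{κ,p}(ℝ^N), lim_{t→0⁺} ℱ_{t,p}(u) = [u]_{W^{κ,p}}^p; (ii) for every infinitesimal sequence (t_k) ⊂ (0,1) and every sequence u_k → u in L^p(ℝ^N) with u ∈ W^{κ,p}(ℝ^N), liminf_{k→∞} ℱ_{t_k,p}(u_k) ≥ [u]_{W^{κ,p}}^p; (iii) the functionals are coercive on W^{κ,p}(ℝ^N): if u_k → u in L^p(ℝ^N) and liminf_{k→∞} ℱ_{t_k,p}(u_k) < ∞, then u ∈ W^{κ,p}(ℝ^N). -/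
open MeasureTheory Filter Topology Metric
open scoped ENNReal NNReal RealInnerProductSpace

noncomputable section

/-- `ℝ^N` as Euclidean space. -/
abbrev Euc (N : ℕ) : Type := EuclideanSpace ℝ (Fin N)

/-- `g` is the weak (distributional) gradient of `u`, as a function. -/
def HasWeakGrad (N : ℕ) (u : Euc N → ℝ) (g : Euc N → Euc N) : Prop :=
  ∀ (i : Fin N) (φ : Euc N → ℝ), ContDiff ℝ (⊤ : ℕ∞) φ → HasCompactSupport φ →
    (∫ x, u x * fderiv ℝ φ x (EuclideanSpace.single i 1)) = - ∫ x, φ x * g x i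

/-- The total variation `|σ ⬝ Du|(ℝ^N)` of the directional distributional derivative of `u`,
defined by duality. -/
def dirVar (N : ℕ) (u : Euc N → ℝ) (σ : Euc N) : ℝ≥0∞ :=
  ⨆ φ : {φ : Euc N → ℝ // ContDiff ℝ (⊤ : ℕ∞) φ ∧ HasCompactSupport φ ∧ ∀ x, |φ x| ≤ 1},
    ENNReal.ofReal (∫ x, u x * fderiv ℝ (φ : Euc N → ℝ) x σ)

/-- The total variation `|Du|(ℝ^N)` of `u`, defined by duality. -/
def totVar (N : ℕ) (u : Euc N → ℝ) : ℝ≥0∞ :=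
  ⨆ Φ : {Φ : Euc N → Euc N // ContDiff ℝ (⊤ : ℕ∞) Φ ∧ HasCompactSupport Φ ∧ ∀ x, ‖Φ x‖ ≤ 1},
    ENNReal.ofReal (∫ x, u x *
      ∑ i, fderiv ℝ (fun y => (Φ : Euc N → Euc N) y i) x (EuclideanSpace.single i 1))

/-- `‖σ ⬝ Du‖_{L^p}^p`: the `p`-th power of the `L^p`-norm of the directional derivative of `u`
in direction `σ` (total variation of `σ ⬝ Du` when `p = 1`). -/
def dirEnergy (N : ℕ) (p : ℝ) (u : Euc N → ℝ) (σ : Euc N) : ℝ≥0∞ :=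
  if p = 1 then dirVar N u σ
  else sInf {m : ℝ≥0∞ | ∃ g : Euc N → Euc N, MemLp g (ENNReal.ofReal p) volume ∧
    HasWeakGrad N u g ∧ m = ∫⁻ x, ENNReal.ofReal (|∑ i, σ i * g x i| ^ p)}

/-- `‖Du‖_{L^p}^p` (total variation `|Du|(ℝ^N)` when `p = 1`). -/
def gradEnergy (N : ℕ) (p : ℝ) (u : Euc N → ℝ) : ℝ≥0∞ :=
  if p = 1 then totVar N u
  else sInf {m : ℝ≥0∞ | ∃ g : Euc N → Euc N, MemLp g (ENNReal.ofReal p) volume ∧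
    HasWeakGrad N u g ∧ m = ∫⁻ x, ENNReal.ofReal (‖g x‖ ^ p)}

/-- `u ∈ 𝕎^p(ℝ^N)`, i.e. `u ∈ W^{1,p}(ℝ^N)` for `p > 1` and `u ∈ BV(ℝ^N)` for `p = 1`. -/
def MemW (N : ℕ) (p : ℝ) (u : Euc N → ℝ) : Prop :=
  MemLp u (ENNReal.ofReal p) volume ∧
  (if p = 1 then totVar N u < ⊤
   else ∃ g : Euc N → Euc N, MemLp g (ENNReal.ofReal p) volume ∧ HasWeakGrad N u g)

/-- `‖u(⬝ + z) - u‖_{L^p}^p`. -/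
def tdiff (N : ℕ) (p : ℝ) (u : Euc N → ℝ) (z : Euc N) : ℝ≥0∞ :=
  ∫⁻ x, ENNReal.ofReal (|u (x + z) - u x| ^ p)

/-- The BBM energy `ℱ_{t,p}`, double-integral form. -/
def F2 (N : ℕ) (p : ℝ) (ρ : Euc N → ℝ) (u : Euc N → ℝ) : ℝ≥0∞ :=
  ∫⁻ x, ∫⁻ y, ENNReal.ofReal (|u x - u y| ^ p / ‖x - y‖ ^ p * ρ (x - y))

/-- The BBM energy `ℱ_{t,p}`, translation form. -/
def Fz (N : ℕ) (p : ℝ) (ρ : Euc N → ℝ) (u : Euc N → ℝ) : ℝ≥0∞ :=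
  ∫⁻ z, tdiff N p u z * ENNReal.ofReal (ρ z / ‖z‖ ^ p)

/-- `u_k → v` in `L^p(ℝ^N)`. -/
def LpConv (N : ℕ) (p : ℝ) (u : ℕ → Euc N → ℝ) (v : Euc N → ℝ) : Prop :=
  Tendsto (fun k => eLpNorm (fun x => u k x - v x) (ENNReal.ofReal p) volume) atTop (𝓝 0)

/-- The sequence `(u_k)` is locally precompact in `L^p(ℝ^N)`: it is totally bounded in
`L^p(K)` for every compact `K`. -/
def LocPrecompactLp (N : ℕ) (p : ℝ) (u : ℕ → Euc N → ℝ) : Prop :=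
  ∀ K : Set (Euc N), IsCompact K → ∀ ε : ℝ≥0∞, 0 < ε →
    ∃ S : Finset ℕ, ∀ k : ℕ, ∃ j ∈ S,
      eLpNorm (K.indicator (fun x => u k x - u j x)) (ENNReal.ofReal p) volume < ε

/-- `v` is an `L^p_loc` limit of (a subsequence of) `(u_k)`. -/
def IsLocLpLimit (N : ℕ) (p : ℝ) (u : ℕ → Euc N → ℝ) (v : Euc N → ℝ) : Prop :=
  ∃ φ : ℕ → ℕ, StrictMono φ ∧ ∀ K : Set (Euc N), IsCompact K →
    Tendsto (fun k => eLpNorm (K.indicator (fun x => u (φ k) x - v x)) (ENNReal.ofReal p) volume)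
      atTop (𝓝 0)

/-- The cone `𝒞_τ(v) = {x : x ⬝ v ≥ (1 - τ)|x|}`. -/
def coneSet (N : ℕ) (τ : ℝ) (v : Euc N) : Set (Euc N) :=
  {x | (1 - τ) * ‖x‖ ≤ (inner ℝ x v : ℝ)}

/-- The maximal rank condition for a family of kernels indexed by a filter. -/
def MaximalRank {ι : Type*} (N : ℕ) (l : Filter ι) (ρ : ι → Euc N → ℝ≥0∞) : Prop :=
  ∃ τ ∈ Set.Ioo (0:ℝ) 1, ∃ v : Fin N → Euc N,
    (∀ i, ‖v i‖ = 1) ∧ LinearIndependent ℝ v ∧ Submodule.span ℝ (Set.range v) = ⊤ ∧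
    (∀ i j, i ≠ j → coneSet N τ (v i) ∩ coneSet N τ (v j) = {0}) ∧
    0 < ⨅ (δ : ℝ) (_ : 0 < δ), ⨅ i : Fin N,
      liminf (fun t => ∫⁻ z in Metric.ball (0 : Euc N) δ ∩ coneSet N τ (v i), ρ t z) l

/-- The moment function `m_{K,p}(R) = ∫_{B_R} |x|^p K(x) dx`. -/
def mKp (N : ℕ) (p : ℝ) (K : Euc N → ℝ≥0∞) (R : ℝ) : ℝ≥0∞ :=
  ∫⁻ x in Metric.ball (0 : Euc N) R, ENNReal.ofReal (‖x‖ ^ p) * K x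

/-- The renormalization `φ_{K,β,p}(t) = m_{K,p}(β(t))/β(t)^p`. -/
def phiK (N : ℕ) (p : ℝ) (K : Euc N → ℝ≥0∞) (β : ℝ → ℝ) (t : ℝ) : ℝ≥0∞ :=
  mKp N p K (β t) / ENNReal.ofReal (β t ^ p)

/-- The rescaled kernel `K_t(x) = β(t)^N K(β(t) x)`. -/
def resK (N : ℕ) (K : Euc N → ℝ≥0∞) (β : ℝ → ℝ) (t : ℝ) (x : Euc N) : ℝ≥0∞ :=
  ENNReal.ofReal (β t ^ N) * K (β t • x)

/-- The energy `ℱ^{K,β}_{t,p}`. -/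
def FK (N : ℕ) (p : ℝ) (K : Euc N → ℝ≥0∞) (β : ℝ → ℝ) (t : ℝ) (u : Euc N → ℝ) : ℝ≥0∞ :=
  (phiK N p K β t)⁻¹ * ∫⁻ x, ∫⁻ y, ENNReal.ofReal (|u x - u y| ^ p) * resK N K β t (x - y)

/-- The kernel `ρ_t(x) = |x|^p K_t(x)/φ_{K,β,p}(t)` of the special family. -/
def rhoK (N : ℕ) (p : ℝ) (K : Euc N → ℝ≥0∞) (β : ℝ → ℝ) (t : ℝ) (x : Euc N) : ℝ≥0∞ :=
  ENNReal.ofReal (‖x‖ ^ p) * resK N K β t x / phiK N p K β t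

/-- The angular density `θ_{K,p}`. -/
def thetaK (N : ℕ) (p : ℝ) (K : Euc N → ℝ≥0∞) (σ : Euc N) : ℝ≥0∞ :=
  (∫⁻ r in Set.Ioi (0:ℝ), ENNReal.ofReal (r ^ ((N:ℝ) + p - 1)) * K (r • σ)) /
    ∫⁻ x, ENNReal.ofReal (‖x‖ ^ p) * K x

/-- The seminorm `[u]_{W^{κ,p}}^p` of the non-local Sobolev space `W^{κ,p}`. -/
def WkSemi (N : ℕ) (p : ℝ) (κ : Euc N → ℝ≥0∞) (u : Euc N → ℝ) : ℝ≥0∞ :=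
  ∫⁻ z, tdiff N p u z * κ z

/-- `u ∈ W^{κ,p}(ℝ^N)`. -/
def MemWk (N : ℕ) (p : ℝ) (κ : Euc N → ℝ≥0∞) (u : Euc N → ℝ) : Prop :=
  MemLp u (ENNReal.ofReal p) volume ∧ WkSemi N p κ u < ⊤

/-- The support of a measure on a topological space. -/
def measSupport {α : Type*} [TopologicalSpace α] [MeasurableSpace α] (μ : Measure α) : Set α :=
  {x | ∀ U ∈ 𝓝 x, 0 < μ U}

/-- The limit functional `𝒢_p^{μ,ν}`. -/
def Gmunu (N : ℕ) (p : ℝ) (μ : Measure (Metric.sphere (0 : Euc N) 1)) (ν : Measure (Euc N))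
    (u : Euc N → ℝ) : ℝ≥0∞ :=
  (∫⁻ σ, dirEnergy N p u ↑σ ∂μ) +
    ∫⁻ z in {(0 : Euc N)}ᶜ, tdiff N p u z * (ENNReal.ofReal (‖z‖ ^ p))⁻¹ ∂ν

/-- The heat kernel `𝗁_t` on `ℝ^N`. -/
def heatKer (N : ℕ) (t : ℝ) (x : Euc N) : ℝ :=
  (4 * Real.pi * t) ^ (-(N : ℝ) / 2) * Real.exp (-‖x‖ ^ 2 / (4 * t))

/-- The rescaled heat-content energy
`t^{-p/2} ∫ H_t(|u - u(x)|^p)(x) dx`. -/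
def heatE (N : ℕ) (p : ℝ) (t : ℝ) (u : Euc N → ℝ) : ℝ≥0∞ :=
  ENNReal.ofReal (t ^ (-(p / 2))) *
    ∫⁻ x, ∫⁻ y, ENNReal.ofReal (heatKer N t (x - y) * |u y - u x| ^ p)

end


section Helpers

open MeasureTheory Filter Topology

variable {N : ℕ} {p : ℝ}

private lemma tdiff_congr {u v : Euc N → ℝ} (h : u =ᵐ[(volume : Measure (Euc N))] v)
    (z : Euc N) : tdiff N p u z = tdiff N p v z := by
  refine lintegral_congr_ae ?_
  have h2 : (fun x : Euc N => u (x + z)) =ᵐ[(volume : Measure (Euc N))]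
      (fun x => v (x + z)) :=
    (measurePreserving_add_right volume z).quasiMeasurePreserving.ae_eq_comp h
  filter_upwards [h, h2] with x hx hx2
  rw [hx, hx2]

private lemma tdiff_measurable {u : Euc N → ℝ}
    (hu : AEStronglyMeasurable u (volume : Measure (Euc N))) :
    Measurable (tdiff N p u) := by
  obtain ⟨v, hv, huv⟩ := hu
  have heq : tdiff N p u = tdiff N p v := funext fun z => tdiff_congr huv z
  rw [heq]
  have hm : Measurable fun q : Euc N × Euc N =>
      ENNReal.ofReal (|v (q.2 + q.1) - v q.2| ^ p) := by
    apply Measurable.ennreal_ofReal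
    apply Measurable.pow_const
    apply Measurable.abs
    exact (hv.measurable.comp (measurable_snd.add measurable_fst)).sub
      (hv.measurable.comp measurable_snd)
  exact Measurable.lintegral_prod_right
    (f := fun z x => ENNReal.ofReal (|v (x + z) - v x| ^ p)) hm

private lemma tdiff_eq (hp : 1 ≤ p) (u : Euc N → ℝ) (z : Euc N) :
    tdiff N p u z = eLpNorm (fun x => u (x + z) - u x) (ENNReal.ofReal p) volume ^ p := by
  have hp0 : (0:ℝ) < p := lt_of_lt_of_le one_pos hp
  have hq0 : ENNReal.ofReal p ≠ 0 := by
    simp only [ne_eq, ENNReal.ofReal_eq_zero, not_le]; linarith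
  have hqt : ENNReal.ofReal p ≠ ⊤ := ENNReal.ofReal_ne_top
  rw [eLpNorm_eq_lintegral_rpow_enorm_toReal hq0 hqt, ENNReal.toReal_ofReal hp0.le,
    ← ENNReal.rpow_mul, one_div, inv_mul_cancel₀ hp0.ne', ENNReal.rpow_one]
  refine lintegral_congr fun x => ?_
  rw [← Real.norm_eq_abs, ← ofReal_norm,
    ENNReal.ofReal_rpow_of_nonneg (norm_nonneg _) hp0.le]

private lemma tdiff_lt_top (hp : 1 ≤ p) {u : Euc N → ℝ}
    (hu : MemLp u (ENNReal.ofReal p) volume) (z : Euc N) : tdiff N p u z < ⊤ := by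
  have hp0 : (0:ℝ) < p := lt_of_lt_of_le one_pos hp
  have h1 : (1:ℝ≥0∞) ≤ ENNReal.ofReal p := ENNReal.one_le_ofReal.mpr hp
  have hsm : AEStronglyMeasurable (fun x => u (x + z)) (volume : Measure (Euc N)) :=
    hu.aestronglyMeasurable.comp_quasiMeasurePreserving
      (measurePreserving_add_right volume z).quasiMeasurePreserving
  have hle : eLpNorm (fun x => u (x + z) - u x) (ENNReal.ofReal p) volume
      ≤ eLpNorm (fun x => u (x + z)) (ENNReal.ofReal p) volume
        + eLpNorm u (ENNReal.ofReal p) volume :=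
    eLpNorm_sub_le (f := fun x => u (x + z)) (g := u) hsm hu.aestronglyMeasurable h1
  have htr : eLpNorm (fun x => u (x + z)) (ENNReal.ofReal p) volume
      = eLpNorm u (ENNReal.ofReal p) volume :=
    eLpNorm_comp_measurePreserving hu.aestronglyMeasurable
      (measurePreserving_add_right volume z)
  rw [tdiff_eq hp]
  refine ENNReal.rpow_lt_top_of_nonneg hp0.le ?_
  refine (hle.trans_lt ?_).ne
  rw [htr]
  exact ENNReal.add_lt_top.mpr ⟨hu.eLpNorm_lt_top, hu.eLpNorm_lt_top⟩

set_option maxHeartbeats 1000000 in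
private lemma tri {q : ℝ≥0∞} (hq1 : 1 ≤ q) (z : Euc N) {f g : Euc N → ℝ}
    (hf : AEStronglyMeasurable f (volume : Measure (Euc N)))
    (hg : AEStronglyMeasurable g (volume : Measure (Euc N))) :
    eLpNorm (fun x => f (x + z) - f x) q volume ≤
      eLpNorm (fun x => g (x + z) - g x) q volume
        + 2 * eLpNorm (fun x => f x - g x) q volume := by
  have mp := measurePreserving_add_right (volume : Measure (Euc N)) z
  have hfg : AEStronglyMeasurable (fun x => f x - g x) (volume : Measure (Euc N)) :=
    hf.sub hg
  have hA : AEStronglyMeasurable (fun x => f (x + z) - g (x + z))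
      (volume : Measure (Euc N)) :=
    hfg.comp_quasiMeasurePreserving mp.quasiMeasurePreserving
  have hTg : AEStronglyMeasurable (fun x => g (x + z)) (volume : Measure (Euc N)) :=
    hg.comp_quasiMeasurePreserving mp.quasiMeasurePreserving
  have hDg : AEStronglyMeasurable (fun x => g (x + z) - g x) (volume : Measure (Euc N)) :=
    hTg.sub hg
  have key : (fun x => f (x + z) - f x) = (fun x => g (x + z) - g x) +
      ((fun x => f (x + z) - g (x + z)) - fun x => f x - g x) := by
    funext x
    simp only [Pi.add_apply, Pi.sub_apply]
    ring
  rw [key]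
  refine (eLpNorm_add_le hDg (hA.sub hfg) hq1).trans ?_
  have h2 : eLpNorm ((fun x => f (x + z) - g (x + z)) - fun x => f x - g x) q volume ≤
      eLpNorm (fun x => f (x + z) - g (x + z)) q volume
        + eLpNorm (fun x => f x - g x) q volume :=
    eLpNorm_sub_le hA hfg hq1
  have h3 := eLpNorm_comp_measurePreserving (p := q) hfg mp
  simp only [Function.comp_def] at h3
  rw [h3] at h2
  calc eLpNorm (fun x => g (x + z) - g x) q volume
      + eLpNorm ((fun x => f (x + z) - g (x + z)) - fun x => f x - g x) q volume
      ≤ eLpNorm (fun x => g (x + z) - g x) q volume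
        + (eLpNorm (fun x => f x - g x) q volume
          + eLpNorm (fun x => f x - g x) q volume) := add_le_add_right h2 _
    _ = eLpNorm (fun x => g (x + z) - g x) q volume
        + 2 * eLpNorm (fun x => f x - g x) q volume := by rw [two_mul]

private lemma tendsto_of_tri {e : ℝ≥0∞} {ek d : ℕ → ℝ≥0∞}
    (h1 : ∀ k, ek k ≤ e + 2 * d k) (h2 : ∀ k, e ≤ ek k + 2 * d k)
    (hd : Tendsto d atTop (𝓝 0)) : Tendsto ek atTop (𝓝 e) := by
  have h2d : Tendsto (fun k => 2 * d k) atTop (𝓝 0) := by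
    have := ENNReal.Tendsto.const_mul (a := (2:ℝ≥0∞)) hd
      (Or.inr (by norm_num : (2:ℝ≥0∞) ≠ ⊤))
    simpa using this
  have hd2 : Tendsto (fun k => e + 2 * d k) atTop (𝓝 e) := by
    simpa using Tendsto.const_add e h2d
  refine tendsto_of_le_liminf_of_limsup_le ?_ ?_
  · refine ENNReal.le_of_forall_pos_le_add fun ε hε _ => ?_
    have hev : ∀ᶠ k in atTop, 2 * d k < (ε : ℝ≥0∞) :=
      h2d.eventually_lt_const (by exact_mod_cast hε)
    have hev2 : ∀ᶠ k in atTop, e - (ε : ℝ≥0∞) ≤ ek k := by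
      filter_upwards [hev] with k hk
      exact tsub_le_iff_right.mpr ((h2 k).trans (add_le_add_right hk.le _))
    have hlim : e - (ε : ℝ≥0∞) ≤ liminf ek atTop := le_liminf_of_le (by isBoundedDefault) hev2
    exact tsub_le_iff_right.mp hlim
  · refine le_trans (limsup_le_limsup (Eventually.of_forall h1)) ?_
    exact le_of_eq hd2.limsup_eq

private lemma tendsto_tdiff (hp : 1 ≤ p) {u : Euc N → ℝ} {uk : ℕ → Euc N → ℝ}
    (hu : MemLp u (ENNReal.ofReal p) volume)
    (huk : ∀ k, MemLp (uk k) (ENNReal.ofReal p) volume)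
    (hconv : Tendsto (fun k => eLpNorm (fun x => uk k x - u x) (ENNReal.ofReal p) volume)
      atTop (𝓝 0)) (z : Euc N) :
    Tendsto (fun k => tdiff N p (uk k) z) atTop (𝓝 (tdiff N p u z)) := by
  have h1 : (1:ℝ≥0∞) ≤ ENNReal.ofReal p := ENNReal.one_le_ofReal.mpr hp
  have key : Tendsto
      (fun k => eLpNorm (fun x => uk k (x + z) - uk k x) (ENNReal.ofReal p) volume)
      atTop (𝓝 (eLpNorm (fun x => u (x + z) - u x) (ENNReal.ofReal p) volume)) := by
    refine tendsto_of_tri (fun k => ?_) (fun k => ?_) hconv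
    · exact tri h1 z (huk k).aestronglyMeasurable hu.aestronglyMeasurable
    · have h := tri h1 z hu.aestronglyMeasurable (huk k).aestronglyMeasurable
      have hneg : (fun x => u x - uk k x) = -(fun x => uk k x - u x) :=
        funext fun x => (neg_sub _ _).symm
      rwa [hneg, eLpNorm_neg] at h
  simp only [tdiff_eq hp]
  exact (ENNReal.continuous_rpow_const.tendsto _).comp key

private lemma key_liminf (hp : 1 ≤ p) {ρk : ℕ → Euc N → ℝ} {κ : Euc N → ℝ≥0∞}
    (hρm : ∀ k, AEMeasurable (ρk k) (volume : Measure (Euc N)))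
    {u : Euc N → ℝ} {uk : ℕ → Euc N → ℝ}
    (hu : MemLp u (ENNReal.ofReal p) volume)
    (huk : ∀ k, MemLp (uk k) (ENNReal.ofReal p) volume)
    (hconv : Tendsto (fun k => eLpNorm (fun x => uk k x - u x) (ENNReal.ofReal p) volume)
      atTop (𝓝 0))
    (hlimae : ∀ᵐ z : Euc N, Tendsto (fun k => ENNReal.ofReal (ρk k z / ‖z‖ ^ p)) atTop
      (𝓝 (κ z))) :
    WkSemi N p κ u ≤ liminf (fun k => Fz N p (ρk k) (uk k)) atTop := by
  have hmeas : ∀ k, AEMeasurable (fun z => tdiff N p (uk k) z *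
      ENNReal.ofReal (ρk k z / ‖z‖ ^ p)) (volume : Measure (Euc N)) := fun k =>
    (tdiff_measurable (huk k).aestronglyMeasurable).aemeasurable.mul
      (((hρm k).div ((measurable_norm.pow_const p).aemeasurable)).ennreal_ofReal)
  have hae : ∀ᵐ z : Euc N, tdiff N p u z * κ z ≤
      liminf (fun k => tdiff N p (uk k) z * ENNReal.ofReal (ρk k z / ‖z‖ ^ p)) atTop := by
    filter_upwards [hlimae] with z hz
    rcases eq_or_ne (tdiff N p u z * κ z) 0 with h0 | h0
    · rw [h0]; exact zero_le
    · rcases mul_ne_zero_iff.mp h0 with ⟨ha, hb⟩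
      have ht : Tendsto
          (fun k => tdiff N p (uk k) z * ENNReal.ofReal (ρk k z / ‖z‖ ^ p)) atTop
          (𝓝 (tdiff N p u z * κ z)) :=
        ENNReal.Tendsto.mul (tendsto_tdiff hp hu huk hconv z) (Or.inl ha) hz (Or.inl hb)
      exact ht.liminf_eq.ge
  exact le_trans (lintegral_mono_ae hae) (lintegral_liminf_le' hmeas)

end Helpers

section Statements

/-- **Non-local-to-non-local convergence.**
If `ρ_t(z)/|z|^p ≤ C κ(z)` uniformly and `ρ_t(z)/|z|^p → κ(z)` a.e. as `t → 0⁺`, then the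
energies `ℱ_{t,p}` converge to the seminorm `[·]_{W^{κ,p}}^p` pointwise on `W^{κ,p}(ℝ^N)`, the
`Γ`-`liminf` inequality holds, and the functionals are coercive on `W^{κ,p}(ℝ^N)`. -/
theorem nonlocal_limit
    (N : ℕ) (hN : 1 ≤ N) (p : ℝ) (hp : 1 ≤ p)
    (ρ : ℝ → Euc N → ℝ)
    (hρ0 : ∀ t ∈ Set.Ioo (0:ℝ) 1, ∀ x, 0 ≤ ρ t x)
    (hρloc : ∀ t ∈ Set.Ioo (0:ℝ) 1, LocallyIntegrable (ρ t) volume)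
    (κ : Euc N → ℝ≥0∞) (hκ : Measurable κ)
    (C : ℝ) (hC : 0 < C)
    (hdom : ∀ t ∈ Set.Ioo (0:ℝ) 1, ∀ᵐ z : Euc N,
      ENNReal.ofReal (ρ t z / ‖z‖ ^ p) ≤ ENNReal.ofReal C * κ z)
    (hlim : ∀ᵐ z : Euc N, Tendsto (fun t => ENNReal.ofReal (ρ t z / ‖z‖ ^ p))
      (𝓝[Set.Ioo (0:ℝ) 1] 0) (𝓝 (κ z))) :
    (∀ u : Euc N → ℝ, MemWk N p κ u →
      Tendsto (fun t => Fz N p (ρ t) u) (𝓝[Set.Ioo (0:ℝ) 1] 0) (𝓝 (WkSemi N p κ u))) ∧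
    (∀ t : ℕ → ℝ, (∀ k, t k ∈ Set.Ioo (0:ℝ) 1) → Tendsto t atTop (𝓝 0) →
      ∀ (u : Euc N → ℝ) (uk : ℕ → Euc N → ℝ), MemWk N p κ u →
        (∀ k, MemLp (uk k) (ENNReal.ofReal p) volume) → LpConv N p uk u →
        WkSemi N p κ u ≤ Filter.liminf (fun k => Fz N p (ρ (t k)) (uk k)) atTop) ∧
    (∀ t : ℕ → ℝ, (∀ k, t k ∈ Set.Ioo (0:ℝ) 1) → Tendsto t atTop (𝓝 0) →
      ∀ (u : Euc N → ℝ) (uk : ℕ → Euc N → ℝ), MemLp u (ENNReal.ofReal p) volume →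
        (∀ k, MemLp (uk k) (ENNReal.ofReal p) volume) → LpConv N p uk u →
        Filter.liminf (fun k => Fz N p (ρ (t k)) (uk k)) atTop < ⊤ →
        MemWk N p κ u) := by
  constructor
  · -- pointwise convergence
    intro u hu
    rw [Filter.tendsto_iff_seq_tendsto]
    intro x hx
    obtain ⟨hx0, hxm⟩ := tendsto_nhdsWithin_iff.mp hx
    obtain ⟨K, hK⟩ := eventually_atTop.mp hxm
    rw [← tendsto_add_atTop_iff_nat K]
    set y : ℕ → ℝ := fun n => x (n + K) with hy
    have hy0 : Tendsto y atTop (𝓝[Set.Ioo (0:ℝ) 1] 0) := hx.comp (tendsto_add_atTop_nat K)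
    have hyI : ∀ n, y n ∈ Set.Ioo (0:ℝ) 1 := fun n => hK (n + K) (Nat.le_add_left K n)
    refine tendsto_lintegral_of_dominated_convergence' (μ := (volume : Measure (Euc N)))
      (F := fun n z => tdiff N p u z * ENNReal.ofReal (ρ (y n) z / ‖z‖ ^ p))
      (f := fun z => tdiff N p u z * κ z)
      (fun z => ENNReal.ofReal C * (tdiff N p u z * κ z)) ?_ ?_ ?_ ?_
    · intro n
      exact (tdiff_measurable hu.1.aestronglyMeasurable).aemeasurable.mul
        ((((hρloc _ (hyI n)).aestronglyMeasurable.aemeasurable).div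
          ((measurable_norm.pow_const p).aemeasurable)).ennreal_ofReal)
    · intro n
      filter_upwards [hdom (y n) (hyI n)] with z hzd
      exact le_trans (mul_le_mul_right hzd _) (le_of_eq (mul_left_comm _ _ _))
    · rw [lintegral_const_mul' _ _ ENNReal.ofReal_ne_top]
      exact ENNReal.mul_ne_top ENNReal.ofReal_ne_top hu.2.ne
    · filter_upwards [hlim] with z hz
      exact ENNReal.Tendsto.const_mul (hz.comp hy0) (Or.inr (tdiff_lt_top hp hu.1 z).ne)
  constructor
  · -- Γ-liminf
    intro t ht h0 u uk hu hmk hconv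
    have htt : Tendsto t atTop (𝓝[Set.Ioo (0:ℝ) 1] 0) :=
      tendsto_nhdsWithin_iff.mpr ⟨h0, Eventually.of_forall ht⟩
    exact key_liminf hp (fun k => (hρloc (t k) (ht k)).aestronglyMeasurable.aemeasurable)
      hu.1 hmk hconv (hlim.mono fun z hz => hz.comp htt)
  · -- coercivity
    intro t ht h0 u uk hu hmk hconv hfin
    have htt : Tendsto t atTop (𝓝[Set.Ioo (0:ℝ) 1] 0) :=
      tendsto_nhdsWithin_iff.mpr ⟨h0, Eventually.of_forall ht⟩
    exact ⟨hu, lt_of_le_of_lt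
      (key_liminf hp (fun k => (hρloc (t k) (ht k)).aestronglyMeasurable.aemeasurable)
        hu hmk hconv (hlim.mono fun z hz => hz.comp htt)) hfin⟩


end Statements
end

section
/- Let N ≥ 1, p ∈ [1,∞), let (ρ_t)_{t∈(0,1)} be non-negative functions in L¹_loc(ℝ^N), and let J ⊂ (0,1) have 0 in its closure. If there exists C > 0 such that limsup_{t∈J, t→0⁺} ℱ_{t,p}(u) ≤ C ‖Du‖_{L^p}^p for every compactly supported Lipschitz function u on ℝ^N, then sup_{R>0} limsup_{t∈J, t→0⁺} R^p ∫_{ℝ^N} ρ_t(z)/(R^p + |z|^p) dz < ∞. -/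
open MeasureTheory Filter Topology Metric
open scoped ENNReal NNReal RealInnerProductSpace

section Statements

section AuxForLemma25

open MeasureTheory Filter Metric

variable {N : ℕ}

private lemma uR_lip (R : ℝ) : LipschitzWith 1 (fun y : Euc N => max 0 (R - ‖y‖)) := by
  have h2 : LipschitzWith 1 (fun y : Euc N => ‖y‖) := lipschitzWith_one_norm
  have hsub : LipschitzWith 1 (fun t : ℝ => R - t) := by
    apply LipschitzWith.of_dist_le_mul
    intro a b
    have he : (R - a) - (R - b) = -(a - b) := by ring
    rw [Real.dist_eq, Real.dist_eq, he, abs_neg, NNReal.coe_one, one_mul]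
  have h : LipschitzWith 1 (fun y : Euc N => R - ‖y‖) := by simpa [Function.comp_def] using hsub.comp h2
  simpa using h.const_max 0

private lemma core_est {R : ℝ} (hR : 0 < R) (x z : Euc N) (hz : z ≠ 0)
    (hx : ‖x‖ ≤ R / 4) (hxz : 2 * ⟪x, z⟫ ≤ -(‖x‖ * ‖z‖)) :
    3 / 8 * min ‖z‖ (2 * R) ≤ |max 0 (R - ‖x‖) - max 0 (R - ‖x - z‖)| := by
  have hz0 : 0 < ‖z‖ := norm_pos_iff.2 hz
  have hxn : (0:ℝ) ≤ ‖x‖ := norm_nonneg x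
  have hux : max 0 (R - ‖x‖) = R - ‖x‖ := max_eq_right (by linarith)
  have hmin1 : min ‖z‖ (2 * R) ≤ ‖z‖ := min_le_left _ _
  have hmin2 : min ‖z‖ (2 * R) ≤ 2 * R := min_le_right _ _
  rcases le_or_gt R ‖x - z‖ with h | h
  · have huy : max 0 (R - ‖x - z‖) = 0 := max_eq_left (by linarith)
    rw [hux, huy, sub_zero, abs_of_nonneg (by linarith)]
    linarith
  · have huy : max 0 (R - ‖x - z‖) = R - ‖x - z‖ := max_eq_right (by linarith)
    have hsq : ‖x - z‖ ^ 2 = ‖x‖ ^ 2 - 2 * ⟪x, z⟫ + ‖z‖ ^ 2 := norm_sub_sq_real x z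
    have hkey : ‖x‖ + ‖z‖ / 2 ≤ ‖x - z‖ := by
      nlinarith [norm_nonneg (x - z), hz0, hxn, hsq, hxz]
    rw [hux, huy, abs_of_nonneg (by linarith)]
    linarith

private lemma coeff_est {R p : ℝ} (hR : 0 < R) (hp : 1 ≤ p) {A : ℝ} (hA : 0 < A) :
    R ^ p / (R ^ p + A ^ p) ≤ min A (2 * R) ^ p / A ^ p := by
  have hRp : (0:ℝ) < R ^ p := Real.rpow_pos_of_pos hR p
  have hAp : (0:ℝ) < A ^ p := Real.rpow_pos_of_pos hA p
  rcases le_or_gt A (2 * R) with h | h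
  · rw [min_eq_left h, div_self hAp.ne', div_le_one (by linarith)]
    linarith
  · rw [min_eq_right h.le]
    have h1 : R ^ p ≤ (2 * R) ^ p :=
      Real.rpow_le_rpow hR.le (by linarith) (by linarith)
    gcongr
    linarith

private lemma ptwise_est {R p : ℝ} (hR : 0 < R) (hp : 1 ≤ p) (ρv : ℝ) (hρv : 0 ≤ ρv)
    (x z : Euc N) (hz : z ≠ 0) (hx : ‖x‖ ≤ R / 4) (hxz : 2 * ⟪x, z⟫ ≤ -(‖x‖ * ‖z‖)) :
    (3 / 8 : ℝ) ^ p * (R ^ p * (ρv / (R ^ p + ‖z‖ ^ p)))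
      ≤ |max 0 (R - ‖x‖) - max 0 (R - ‖x - z‖)| ^ p / ‖z‖ ^ p * ρv := by
  have hA : 0 < ‖z‖ := norm_pos_iff.2 hz
  have hp0 : (0:ℝ) ≤ p := by linarith
  have hcore := core_est hR x z hz hx hxz
  have hmin0 : (0:ℝ) ≤ 3 / 8 * min ‖z‖ (2 * R) := by positivity
  have hDp : (3 / 8 * min ‖z‖ (2 * R)) ^ p
      ≤ |max 0 (R - ‖x‖) - max 0 (R - ‖x - z‖)| ^ p :=
    Real.rpow_le_rpow hmin0 hcore hp0
  have hsplit : (3 / 8 * min ‖z‖ (2 * R)) ^ p = (3/8:ℝ) ^ p * min ‖z‖ (2 * R) ^ p :=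
    Real.mul_rpow (by norm_num) (le_min hA.le (by linarith))
  have hco := coeff_est hR hp hA
  have key : (3/8:ℝ) ^ p * (R ^ p / (R ^ p + ‖z‖ ^ p))
      ≤ |max 0 (R - ‖x‖) - max 0 (R - ‖x - z‖)| ^ p / ‖z‖ ^ p := by
    have h38 : (0:ℝ) ≤ (3/8:ℝ) ^ p := Real.rpow_nonneg (by norm_num) p
    have h1 : (3/8:ℝ) ^ p * (R ^ p / (R ^ p + ‖z‖ ^ p))
        ≤ (3/8:ℝ) ^ p * (min ‖z‖ (2 * R) ^ p / ‖z‖ ^ p) :=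
      mul_le_mul_of_nonneg_left hco h38
    have h2 : (3/8:ℝ) ^ p * (min ‖z‖ (2 * R) ^ p / ‖z‖ ^ p)
        = (3 / 8 * min ‖z‖ (2 * R)) ^ p / ‖z‖ ^ p := by
      rw [hsplit]; ring
    have hAp : (0:ℝ) < ‖z‖ ^ p := Real.rpow_pos_of_pos hA p
    have h3 : (3 / 8 * min ‖z‖ (2 * R)) ^ p / ‖z‖ ^ p
        ≤ |max 0 (R - ‖x‖) - max 0 (R - ‖x - z‖)| ^ p / ‖z‖ ^ p := by
      gcongr
    linarith
  calc (3 / 8 : ℝ) ^ p * (R ^ p * (ρv / (R ^ p + ‖z‖ ^ p)))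
      = ((3/8:ℝ) ^ p * (R ^ p / (R ^ p + ‖z‖ ^ p))) * ρv := by ring
    _ ≤ (|max 0 (R - ‖x‖) - max 0 (R - ‖x - z‖)| ^ p / ‖z‖ ^ p) * ρv :=
      mul_le_mul_of_nonneg_right key hρv

private lemma ball_subset_cone {R : ℝ} (hR : 0 < R) (z : Euc N) (hz : z ≠ 0) :
    Metric.ball ((-((3*R/16) * ‖z‖⁻¹)) • z) (R/16)
      ⊆ {x : Euc N | ‖x‖ ≤ R/4 ∧ 2 * ⟪x, z⟫ ≤ -(‖x‖ * ‖z‖)} := by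
  intro x hx
  have hz0 : 0 < ‖z‖ := norm_pos_iff.2 hz
  set b : Euc N := (-((3*R/16) * ‖z‖⁻¹)) • z with hbdef
  have hbn : ‖b‖ = 3*R/16 := by
    rw [hbdef, norm_smul]
    simp only [norm_neg, norm_mul, norm_inv, norm_norm, Real.norm_eq_abs]
    rw [abs_of_nonneg (by positivity : (0:ℝ) ≤ 3*R/16)]
    field_simp
    exact (abs_of_nonneg hz0.le).symm
  have hbz : ⟪b, z⟫ = -(3*R/16) * ‖z‖ := by
    rw [hbdef, real_inner_smul_left, real_inner_self_eq_norm_sq]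
    field_simp
  have hdist : ‖x - b‖ < R/16 := by
    rw [← dist_eq_norm]; exact mem_ball.1 hx
  refine ⟨?_, ?_⟩
  · have h1 : ‖x‖ - ‖b‖ ≤ ‖x - b‖ := norm_sub_norm_le x b
    rw [hbn] at h1; linarith
  · have h2 : ⟪x - b, z⟫ ≤ ‖x - b‖ * ‖z‖ := real_inner_le_norm _ _
    have h3 : ⟪x - b, z⟫ = ⟪x, z⟫ - ⟪b, z⟫ := inner_sub_left _ _ _
    have h4 : ‖x - b‖ * ‖z‖ ≤ (R/16) * ‖z‖ :=
      mul_le_mul_of_nonneg_right hdist.le hz0.le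
    have h5 : ‖x‖ ≤ R/4 := by
      have h1 : ‖x‖ - ‖b‖ ≤ ‖x - b‖ := norm_sub_norm_le x b
      rw [hbn] at h1; linarith
    have h6 : ‖x‖ * ‖z‖ ≤ (R/4) * ‖z‖ := mul_le_mul_of_nonneg_right h5 hz0.le
    have h7 : ⟪x, z⟫ ≤ -(3*R/16) * ‖z‖ + (R/16) * ‖z‖ := by
      rw [h3, hbz] at h2; linarith
    nlinarith [hz0.le]

private lemma main_est {N : ℕ} (hN : 1 ≤ N) {p : ℝ} (hp : 1 ≤ p) {R : ℝ} (hR : 0 < R)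
    (ρt : Euc N → ℝ) (hρ0 : ∀ x, 0 ≤ ρt x) (hρm : AEMeasurable ρt volume) :
    ENNReal.ofReal ((3/8:ℝ) ^ p) * volume (Metric.ball (0 : Euc N) (R/16)) *
      (ENNReal.ofReal (R ^ p) * ∫⁻ z, ENNReal.ofReal (ρt z / (R ^ p + ‖z‖ ^ p)))
      ≤ F2 N p ρt (fun y => max 0 (R - ‖y‖)) := by
  haveI : Nontrivial (Euc N) := ⟨EuclideanSpace.single (⟨0, hN⟩ : Fin N) (1:ℝ), 0, by
    intro h
    have h0 := congrArg (fun v : Euc N => v ⟨0, hN⟩) h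
    simp [EuclideanSpace.single_apply] at h0⟩
  set u : Euc N → ℝ := fun y => max 0 (R - ‖y‖) with hu
  set T : Set (Euc N × Euc N) :=
    {q | ‖q.1‖ ≤ R/4 ∧ 2 * ⟪q.1, q.2⟫ ≤ -(‖q.1‖ * ‖q.2‖)} with hT
  have hTclosed : IsClosed T := by
    have h1 : IsClosed {q : Euc N × Euc N | ‖q.1‖ ≤ R/4} :=
      isClosed_le continuous_fst.norm continuous_const
    have h2 : IsClosed {q : Euc N × Euc N | 2 * ⟪q.1, q.2⟫ ≤ -(‖q.1‖ * ‖q.2‖)} :=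
      isClosed_le (continuous_const.mul (continuous_fst.inner continuous_snd))
        (continuous_fst.norm.mul continuous_snd.norm).neg
    exact h1.inter h2
  have hTm : MeasurableSet T := hTclosed.measurableSet
  set c : Euc N → ℝ≥0∞ := fun z =>
    ENNReal.ofReal ((3/8:ℝ) ^ p) * (ENNReal.ofReal (R ^ p) *
      ENNReal.ofReal (ρt z / (R ^ p + ‖z‖ ^ p))) with hc
  have hnormp : Measurable (fun z : Euc N => R ^ p + ‖z‖ ^ p) := by
    apply Measurable.add measurable_const
    exact (continuous_norm.rpow_const (fun z => Or.inr (by linarith))).measurable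
  have hcm : AEMeasurable c volume := by
    apply AEMeasurable.const_mul
    apply AEMeasurable.const_mul
    exact ENNReal.measurable_ofReal.comp_aemeasurable (hρm.div hnormp.aemeasurable)
  have hzae : ∀ᵐ z : Euc N ∂(volume : Measure (Euc N)), z ≠ 0 := by
    rw [ae_iff]
    have hset : {z : Euc N | ¬z ≠ 0} = {0} := by ext z; simp
    rw [hset]
    exact measure_singleton 0
  have hS : ∀ z : Euc N, z ≠ 0 →
      c z * volume (Metric.ball (0 : Euc N) (R/16))
        ≤ ∫⁻ x, T.indicator (fun q => c q.2) (x, z) := by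
    intro z hz
    have hSm : MeasurableSet {x : Euc N | (x, z) ∈ T} := by
      have hco : Continuous fun x : Euc N => (x, z) := continuous_id.prodMk continuous_const
      exact hTm.preimage hco.measurable
    have heq : ∀ x : Euc N, T.indicator (fun q => c q.2) (x, z)
        = {x : Euc N | (x, z) ∈ T}.indicator (fun _ => c z) x := by
      intro x
      by_cases hxz : (x, z) ∈ T
      · rw [Set.indicator_of_mem hxz]
        exact (Set.indicator_of_mem (show x ∈ {x : Euc N | (x, z) ∈ T} from hxz) (fun _ => c z)).symm
      · rw [Set.indicator_of_notMem hxz]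
        exact (Set.indicator_of_notMem (show x ∉ {x : Euc N | (x, z) ∈ T} from hxz) (fun _ => c z)).symm
    have hballeq : volume (Metric.ball ((-((3*R/16) * ‖z‖⁻¹)) • z : Euc N) (R/16))
        = volume (Metric.ball (0 : Euc N) (R/16)) :=
      Measure.addHaar_ball_center volume _ _
    calc c z * volume (Metric.ball (0 : Euc N) (R/16))
        = c z * volume (Metric.ball ((-((3*R/16) * ‖z‖⁻¹)) • z : Euc N) (R/16)) := by
          rw [hballeq]
      _ ≤ c z * volume {x : Euc N | (x, z) ∈ T} := by
          gcongr
          intro x hx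
          exact ball_subset_cone hR z hz hx
      _ = ∫⁻ x, {x : Euc N | (x, z) ∈ T}.indicator (fun _ => c z) x := by
          rw [lintegral_indicator_const hSm, mul_comm]
      _ = ∫⁻ x, T.indicator (fun q => c q.2) (x, z) :=
          lintegral_congr fun x => (heq x).symm
  have hptw : ∀ x : Euc N, (∫⁻ z, T.indicator (fun q => c q.2) (x, z))
      ≤ ∫⁻ y, ENNReal.ofReal (|u x - u y| ^ p / ‖x - y‖ ^ p * ρt (x - y)) := by
    intro x
    have hmp : MeasurePreserving (fun z : Euc N => x - z) volume volume :=
      Measure.measurePreserving_sub_left volume x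
    have hemb : MeasurableEmbedding (fun z : Euc N => x - z) :=
      (MeasurableEquiv.subLeft x).measurableEmbedding
    conv_rhs => rw [← hmp.lintegral_comp_emb hemb]
    simp only [sub_sub_cancel]
    refine lintegral_mono_ae ?_
    filter_upwards [hzae] with z hz
    by_cases hxz : (x, z) ∈ T
    · rw [Set.indicator_of_mem hxz]
      have hest := ptwise_est hR hp (ρt z) (hρ0 z) x z hz hxz.1 hxz.2
      calc c z = ENNReal.ofReal ((3/8:ℝ) ^ p * (R ^ p * (ρt z / (R ^ p + ‖z‖ ^ p)))) := by
            simp only [hc]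
            rw [← ENNReal.ofReal_mul (by positivity), ← ENNReal.ofReal_mul (by positivity)]
        _ ≤ ENNReal.ofReal (|u x - u (x - z)| ^ p / ‖z‖ ^ p * ρt z) :=
            ENNReal.ofReal_le_ofReal hest
    · rw [Set.indicator_of_notMem hxz]; exact zero_le
  have hF : AEMeasurable (fun q : Euc N × Euc N => T.indicator (fun q' => c q'.2) (q.1, q.2))
      ((volume : Measure (Euc N)).prod (volume : Measure (Euc N))) := by
    simp only [Prod.mk.eta]
    exact (hcm.comp_quasiMeasurePreserving Measure.quasiMeasurePreserving_snd).indicator hTm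
  have hswap : (∫⁻ x, ∫⁻ z, T.indicator (fun q => c q.2) (x, z))
      = ∫⁻ z, ∫⁻ x, T.indicator (fun q => c q.2) (x, z) :=
    lintegral_lintegral_swap hF
  have hVne : volume (Metric.ball (0 : Euc N) (R/16)) ≠ ⊤ := measure_ball_lt_top.ne
  have hI1 : (∫⁻ z, c z)
      = ENNReal.ofReal ((3/8:ℝ) ^ p) * (ENNReal.ofReal (R ^ p) *
        ∫⁻ z, ENNReal.ofReal (ρt z / (R ^ p + ‖z‖ ^ p))) := by
    simp only [hc]
    rw [lintegral_const_mul' _ _ ENNReal.ofReal_ne_top,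
      lintegral_const_mul' _ _ ENNReal.ofReal_ne_top]
  calc ENNReal.ofReal ((3/8:ℝ) ^ p) * volume (Metric.ball (0 : Euc N) (R/16)) *
      (ENNReal.ofReal (R ^ p) * ∫⁻ z, ENNReal.ofReal (ρt z / (R ^ p + ‖z‖ ^ p)))
      = ∫⁻ z, c z * volume (Metric.ball (0 : Euc N) (R/16)) := by
        rw [lintegral_mul_const' _ _ hVne, hI1]; ring
    _ ≤ ∫⁻ z, ∫⁻ x, T.indicator (fun q => c q.2) (x, z) := by
        refine lintegral_mono_ae ?_
        filter_upwards [hzae] with z hz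
        exact hS z hz
    _ = ∫⁻ x, ∫⁻ z, T.indicator (fun q => c q.2) (x, z) := hswap.symm
    _ ≤ ∫⁻ x, ∫⁻ y, ENNReal.ofReal (|u x - u y| ^ p / ‖x - y‖ ^ p * ρt (x - y)) :=
        lintegral_mono hptw
    _ = F2 N p ρt (fun y => max 0 (R - ‖y‖)) := rfl

end AuxForLemma25



/-- **Necessity of the uniform kernel bound (Lemma 2.5).**
If the BBM energies admit, asymptotically along `J`, the upper bound `C ‖Du‖_{L^p}^p` on all
compactly supported Lipschitz functions, then the kernels satisfy the uniform bound
`sup_{R>0} limsup_{t→0⁺} R^p ∫ ρ_t(z)/(R^p + |z|^p) dz < ∞`. -/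
theorem lipschitz_bound_implies_kernel_bound
    (N : ℕ) (hN : 1 ≤ N) (p : ℝ) (hp : 1 ≤ p)
    (ρ : ℝ → Euc N → ℝ)
    (hρ0 : ∀ t ∈ Set.Ioo (0:ℝ) 1, ∀ x, 0 ≤ ρ t x)
    (hρloc : ∀ t ∈ Set.Ioo (0:ℝ) 1, LocallyIntegrable (ρ t) volume)
    (J : Set ℝ) (hJ : J ⊆ Set.Ioo 0 1) (hJ0 : (0:ℝ) ∈ closure J)
    (C : ℝ) (hC : 0 < C)
    (hbound : ∀ u : Euc N → ℝ, (∃ c : ℝ≥0, LipschitzWith c u) → HasCompactSupport u →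
      Filter.limsup (fun t => F2 N p (ρ t) u) (𝓝[J] 0) ≤
        ENNReal.ofReal C * ∫⁻ x, ENNReal.ofReal (‖fderiv ℝ u x‖ ^ p)) :
    (⨆ (R : ℝ) (_ : 0 < R),
      Filter.limsup (fun t => ENNReal.ofReal (R ^ p) *
        ∫⁻ z, ENNReal.ofReal (ρ t z / (R ^ p + ‖z‖ ^ p))) (𝓝[J] 0)) < ⊤ := by
  haveI : Nontrivial (Euc N) := ⟨EuclideanSpace.single (⟨0, hN⟩ : Fin N) (1:ℝ), 0, by
    intro h
    have h0 := congrArg (fun v : Euc N => v ⟨0, hN⟩) h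
    simp [EuclideanSpace.single_apply] at h0⟩
  have hp0 : (0:ℝ) < p := by linarith
  set ν : ℝ≥0∞ := volume (Metric.ball (0 : Euc N) 1) with hν
  have hν0 : ν ≠ 0 := (measure_ball_pos volume _ one_pos).ne'
  have hνtop : ν ≠ ⊤ := measure_ball_lt_top.ne
  have hc'pos : (0:ℝ) < (3/8:ℝ) ^ p * (1/16:ℝ) ^ N := by positivity
  set c' : ℝ≥0∞ := ENNReal.ofReal ((3/8:ℝ) ^ p * (1/16:ℝ) ^ N) with hc'
  have hc'0 : c' ≠ 0 := (ENNReal.ofReal_pos.2 hc'pos).ne'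
  have hc'top : c' ≠ ⊤ := ENNReal.ofReal_ne_top
  have hM : ENNReal.ofReal C * c'⁻¹ < ⊤ :=
    ENNReal.mul_lt_top ENNReal.ofReal_lt_top (ENNReal.inv_lt_top.2 (zero_lt_iff.2 hc'0))
  refine lt_of_le_of_lt (iSup_le fun R => iSup_le fun hR => ?_) hM
  set u : Euc N → ℝ := fun y => max 0 (R - ‖y‖) with hudef
  have hsupp : HasCompactSupport u := by
    apply HasCompactSupport.intro (isCompact_closedBall (0:Euc N) R)
    intro x hx
    have hx' : R < ‖x‖ := not_le.1 (by simpa [Metric.mem_closedBall, dist_zero_right] using hx)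
    exact max_eq_left (by linarith)
  have hgrad : (∫⁻ x : Euc N, ENNReal.ofReal (‖fderiv ℝ u x‖ ^ p))
      ≤ volume (Metric.closedBall (0:Euc N) R) := by
    have hptw : ∀ x : Euc N, ENNReal.ofReal (‖fderiv ℝ u x‖ ^ p)
        ≤ (Metric.closedBall (0:Euc N) R).indicator (fun _ => (1:ℝ≥0∞)) x := by
      intro x
      by_cases hx : x ∈ Metric.closedBall (0:Euc N) R
      · rw [Set.indicator_of_mem hx]
        have hnorm : ‖fderiv ℝ u x‖ ≤ 1 := by
          simpa using norm_fderiv_le_of_lipschitz ℝ (uR_lip R)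
        exact ENNReal.ofReal_le_one.2 (Real.rpow_le_one (norm_nonneg _) hnorm (by linarith))
      · rw [Set.indicator_of_notMem hx]
        have hx' : R < ‖x‖ := not_le.1 (by simpa [Metric.mem_closedBall, dist_zero_right] using hx)
        have hopen : IsOpen {y : Euc N | R < ‖y‖} := isOpen_lt continuous_const continuous_norm
        have hev0 : u =ᶠ[𝓝 x] (fun _ => (0:ℝ)) := by
          filter_upwards [hopen.mem_nhds hx'] with y hy
          have hy' : R < ‖y‖ := hy
          exact max_eq_left (by linarith)
        rw [hev0.fderiv_eq]
        simp [Real.zero_rpow hp0.ne']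
    calc (∫⁻ x : Euc N, ENNReal.ofReal (‖fderiv ℝ u x‖ ^ p))
        ≤ ∫⁻ x, (Metric.closedBall (0:Euc N) R).indicator (fun _ => (1:ℝ≥0∞)) x :=
          lintegral_mono hptw
      _ = volume (Metric.closedBall (0:Euc N) R) := by
          rw [lintegral_indicator_const measurableSet_closedBall, one_mul]
  set a : ℝ≥0∞ := ENNReal.ofReal ((3/8:ℝ) ^ p) * volume (Metric.ball (0:Euc N) (R/16)) with ha
  have hVpos : (0:ℝ≥0∞) < volume (Metric.ball (0:Euc N) (R/16)) :=
    measure_ball_pos volume _ (by positivity)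
  have ha0 : a ≠ 0 := by
    rw [ha]
    exact mul_ne_zero (ENNReal.ofReal_pos.2 (by positivity)).ne' hVpos.ne'
  have hatop : a ≠ ⊤ := by
    rw [ha]
    exact ENNReal.mul_ne_top ENNReal.ofReal_ne_top measure_ball_lt_top.ne
  set G : ℝ → ℝ≥0∞ := fun t => ENNReal.ofReal (R ^ p) *
    ∫⁻ z, ENNReal.ofReal (ρ t z / (R ^ p + ‖z‖ ^ p)) with hG
  have hev : ∀ᶠ t in 𝓝[J] 0, a * G t ≤ F2 N p (ρ t) u := by
    filter_upwards [self_mem_nhdsWithin] with t ht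
    exact main_est hN hp hR (ρ t) (hρ0 t (hJ ht))
      ((hρloc t (hJ ht)).aestronglyMeasurable.aemeasurable)
  have h1 : a * Filter.limsup G (𝓝[J] 0)
      ≤ Filter.limsup (fun t => F2 N p (ρ t) u) (𝓝[J] 0) := by
    rw [← ENNReal.limsup_const_mul_of_ne_top hatop]
    exact Filter.limsup_le_limsup hev
  have h2 := hbound u ⟨1, uR_lip R⟩ hsupp
  have h3 : a * Filter.limsup G (𝓝[J] 0)
      ≤ ENNReal.ofReal C * volume (Metric.closedBall (0:Euc N) R) :=
    h1.trans (h2.trans (mul_le_mul_right hgrad _))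
  have hL : Filter.limsup G (𝓝[J] 0)
      ≤ ENNReal.ofReal C * volume (Metric.closedBall (0:Euc N) R) / a :=
    (ENNReal.le_div_iff_mul_le (Or.inl ha0) (Or.inl hatop)).2 (by rwa [mul_comm])
  refine le_trans hL ?_
  have hfr : Module.finrank ℝ (Euc N) = N := finrank_euclideanSpace_fin
  have hcB : volume (Metric.closedBall (0:Euc N) R) = ENNReal.ofReal (R ^ N) * ν := by
    rw [Measure.addHaar_closedBall volume _ hR.le, hfr]
  have hBall : volume (Metric.ball (0:Euc N) (R/16))
      = ENNReal.ofReal (R ^ N * (1/16:ℝ) ^ N) * ν := by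
    rw [Measure.addHaar_ball volume _ (by positivity : (0:ℝ) ≤ R/16), hfr]
    congr 2
    rw [div_eq_mul_one_div R 16, mul_pow]
  set K : ℝ≥0∞ := ENNReal.ofReal (R ^ N) * ν with hK
  have hcBK : volume (Metric.closedBall (0:Euc N) R) = K := by rw [hK]; exact hcB
  have hK0 : K ≠ 0 := mul_ne_zero (ENNReal.ofReal_pos.2 (by positivity)).ne' hν0
  have hKtop : K ≠ ⊤ := ENNReal.mul_ne_top ENNReal.ofReal_ne_top hνtop
  have haK : a = c' * K := by
    rw [ha, hBall, hK, hc', ENNReal.ofReal_mul (by positivity), ENNReal.ofReal_mul (by positivity)]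
    ring
  rw [hcBK, haK, div_eq_mul_inv, ENNReal.mul_inv (Or.inl hc'0) (Or.inl hc'top)]
  have hfin : ENNReal.ofReal C * K * (c'⁻¹ * K⁻¹) = ENNReal.ofReal C * c'⁻¹ := by
    calc ENNReal.ofReal C * K * (c'⁻¹ * K⁻¹)
        = ENNReal.ofReal C * c'⁻¹ * (K * K⁻¹) := by ring
      _ = ENNReal.ofReal C * c'⁻¹ := by rw [ENNReal.mul_inv_cancel hK0 hKtop, mul_one]
  exact le_of_eq hfin


end Statements
end

section
/- Let N ≥ 1 and p ∈ [1,∞). If λ and μ are non-negative finite Radon measures on S^{N−1}, ν is a non-negative finite Radon measure on ℝ^N, and α ≥ 0 are such that 𝒢_p^{μ,ν}(u) = 𝒢_p^{λ, α δ₀}(u) for every compactly supported Lipschitz function u on ℝ^N, then ν = β δ₀ for some β ≥ 0. -/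
open MeasureTheory Filter Topology Metric
open scoped ENNReal NNReal RealInnerProductSpace

section Aux

open Function

variable {N : ℕ}

/-- Change of variables by scaling for lintegrals on `Euc N`. -/
lemma lint_comp_smul (f : Euc N → ℝ≥0∞) {s : ℝ} (hs : s ≠ 0) :
    ∫⁻ x, f (s • x) = ENNReal.ofReal |(s ^ N)⁻¹| * ∫⁻ x, f x := by
  have e : Euc N ≃ᵐ Euc N := (Homeomorph.smul (Units.mk0 s hs)).toMeasurableEquiv
  have h1 : ∫⁻ a, f a ∂(Measure.map (fun x : Euc N => s • x) volume)
      = ∫⁻ a, f (s • a) := by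
    have := MeasureTheory.lintegral_map_equiv (μ := (volume : Measure (Euc N))) f
      ((Homeomorph.smul (Units.mk0 s hs)).toMeasurableEquiv)
    exact this
  rw [← h1, Measure.map_addHaar_smul (volume : Measure (Euc N)) hs,
    lintegral_smul_measure, finrank_euclideanSpace_fin, smul_eq_mul]

lemma contDiff_comp_smul {n : WithTop ℕ∞} {φ : Euc N → ℝ} (hφ : ContDiff ℝ n φ) (c : ℝ) :
    ContDiff ℝ n (fun y : Euc N => φ (c • y)) :=
  hφ.comp (contDiff_const_smul c)

lemma hcs_comp_smul {φ : Euc N → ℝ} (h : HasCompactSupport φ) {c : ℝ} (hc : c ≠ 0) :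
    HasCompactSupport (fun y : Euc N => φ (c • y)) := by
  apply HasCompactSupport.intro (IsCompact.image h ((continuous_const_smul c⁻¹ : Continuous _)))
  intro x hx
  have : c • x ∉ tsupport φ := by
    intro hmem
    exact hx ⟨c • x, hmem, by simp [smul_smul, inv_mul_cancel₀ hc]⟩
  exact image_eq_zero_of_notMem_tsupport this

lemma fderiv_comp_smul' {φ : Euc N → ℝ} (hφ : Differentiable ℝ φ) (c : ℝ) (x v : Euc N) :
    fderiv ℝ (fun y : Euc N => φ (c • y)) x v = c * fderiv ℝ φ (c • x) v := by
  have h1 : HasFDerivAt (fun y : Euc N => c • y)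
      (c • ContinuousLinearMap.id ℝ (Euc N)) x := by
    exact ((c • ContinuousLinearMap.id ℝ (Euc N)).hasFDerivAt (x := x))
  have h2 : HasFDerivAt φ (fderiv ℝ φ (c • x)) (c • x) :=
    (hφ (c • x)).hasFDerivAt
  have h3 : HasFDerivAt (fun y : Euc N => φ (c • y))
      ((fderiv ℝ φ (c • x)).comp (c • ContinuousLinearMap.id ℝ (Euc N))) x := h2.comp x h1
  rw [h3.fderiv]
  simp [smul_eq_mul, mul_comm]

end Aux
section Aux2
open Function
variable {N : ℕ}

/-- Integration by parts for smooth compactly supported functions. -/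
lemma ibp {n m : WithTop ℕ∞} (hn : 1 ≤ n) (hm : 1 ≤ m) {u φ : Euc N → ℝ}
    (hu : ContDiff ℝ n u) (hcu : HasCompactSupport u)
    (hφ : ContDiff ℝ m φ) (hcφ : HasCompactSupport φ) (v : Euc N) :
    ∫ x, u x * fderiv ℝ φ x v = - ∫ x, φ x * fderiv ℝ u x v := by
  obtain ⟨C, hC⟩ := hφ.lipschitzWith_of_hasCompactSupport hcφ (zero_lt_one.trans_le hm).ne'
  obtain ⟨D, hD⟩ := hu.lipschitzWith_of_hasCompactSupport hcu (zero_lt_one.trans_le hn).ne'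
  have key := LipschitzWith.integral_lineDeriv_mul_eq (μ := (volume : Measure (Euc N)))
    hC hD hcu v
  have e1 : ∀ x : Euc N, lineDeriv ℝ φ x v = fderiv ℝ φ x v := fun x =>
    (hφ.differentiable (zero_lt_one.trans_le hm).ne' x).lineDeriv_eq_fderiv
  have e2 : ∀ x : Euc N, lineDeriv ℝ u x (-v) = - fderiv ℝ u x v := fun x => by
    rw [(hu.differentiable (zero_lt_one.trans_le hn).ne' x).lineDeriv_eq_fderiv]; simp
  simp only [e1, e2] at key
  calc ∫ x, u x * fderiv ℝ φ x v = ∫ x, fderiv ℝ φ x v * u x := by simp [mul_comm]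
    _ = ∫ x, (- fderiv ℝ u x v) * φ x := key
    _ = - ∫ x, φ x * fderiv ℝ u x v := by
        rw [← integral_neg]; congr 1; ext x; ring

lemma tdiff_zero {p : ℝ} (hp : p ≠ 0) (u : Euc N → ℝ) : tdiff N p u 0 = 0 := by
  simp [tdiff, Real.zero_rpow hp]

lemma tdiff_comp_smul (p : ℝ) (u : Euc N → ℝ) {s : ℝ} (hs : s ≠ 0) (z : Euc N) :
    tdiff N p (fun x => u (s • x)) z
      = ENNReal.ofReal |(s ^ N)⁻¹| * tdiff N p u (s • z) := by
  have : ∀ x : Euc N, (fun w : Euc N => ENNReal.ofReal (|u (w + s • z) - u w| ^ p)) (s • x)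
      = ENNReal.ofReal (|u (s • (x + z)) - u (s • x)| ^ p) := by
    intro x; rw [smul_add]
  rw [tdiff, tdiff, ← lint_comp_smul (fun w => ENNReal.ofReal (|u (w + s • z) - u w| ^ p)) hs]
  exact lintegral_congr fun x => (this x).symm

end Aux2
section Aux3
open Function
variable {N : ℕ}

lemma tdiff_le_of_bound {p : ℝ} (hp : 1 ≤ p) {u : Euc N → ℝ} (hcu : HasCompactSupport u)
    (w : Euc N) {b : ℝ} (hb : 0 ≤ b) (h : ∀ x, |u (x + w) - u x| ≤ b) :
    tdiff N p u w ≤ ENNReal.ofReal (b ^ p) * (2 * volume (tsupport u)) := by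
  set K : Set (Euc N) := tsupport u
  set Kw : Set (Euc N) := (fun x : Euc N => x + w) ⁻¹' K
  have hKm : MeasurableSet K := (isClosed_tsupport u).measurableSet
  have hKwm : MeasurableSet Kw := hKm.preimage (measurable_id.add_const w)
  have hpt : ∀ x, ENNReal.ofReal (|u (x + w) - u x| ^ p)
      ≤ (K ∪ Kw).indicator (fun _ => ENNReal.ofReal (b ^ p)) x := by
    intro x
    by_cases hx : x ∈ K ∪ Kw
    · rw [Set.indicator_of_mem hx]
      exact ENNReal.ofReal_le_ofReal
        (Real.rpow_le_rpow (abs_nonneg _) (h x) (by linarith))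
    · rw [Set.indicator_of_notMem hx]
      have h1 : u x = 0 := image_eq_zero_of_notMem_tsupport (fun hm => hx (Or.inl hm))
      have h2 : u (x + w) = 0 := image_eq_zero_of_notMem_tsupport (fun hm => hx (Or.inr hm))
      simp [h1, h2, Real.zero_rpow (by linarith : p ≠ 0)]
  calc tdiff N p u w ≤ ∫⁻ x, (K ∪ Kw).indicator (fun _ => ENNReal.ofReal (b ^ p)) x :=
        lintegral_mono hpt
    _ = ENNReal.ofReal (b ^ p) * volume (K ∪ Kw) := by
        rw [lintegral_indicator (hKm.union hKwm)]; simp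
    _ ≤ ENNReal.ofReal (b ^ p) * (2 * volume K) := by
        apply mul_le_mul_right
        calc volume (K ∪ Kw) ≤ volume K + volume Kw := measure_union_le _ _
          _ = volume K + volume K := by
              rw [measure_preimage_add_right (volume : Measure (Euc N)) w K]
          _ = 2 * volume K := (two_mul _).symm

/-- `tdiff` is bounded by the Lipschitz constant bound. -/
lemma tdiff_le_lip {p : ℝ} (hp : 1 ≤ p) {u : Euc N → ℝ} {L : ℝ≥0} (hL : LipschitzWith L u)
    (hcu : HasCompactSupport u) (w : Euc N) :
    tdiff N p u w ≤ ENNReal.ofReal ((L * ‖w‖) ^ p) * (2 * volume (tsupport u)) :=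
  tdiff_le_of_bound hp hcu w (by positivity) (fun x => by
    have := hL.dist_le_mul (x + w) x
    simpa [Real.dist_eq, dist_eq_norm] using this)

end Aux3
section Aux4
open Function
variable {N : ℕ}

lemma sum_coord_smul_single (σ : Euc N) : ∑ i, σ i • EuclideanSpace.single i (1:ℝ) = σ := by
  have := (EuclideanSpace.basisFun (Fin N) ℝ).toBasis.sum_repr σ
  simpa [EuclideanSpace.basisFun_apply] using this

lemma grad_spec {u : Euc N → ℝ} (hu : ContDiff ℝ ((⊤:ℕ∞) : WithTop ℕ∞) u)
    (hcu : HasCompactSupport u) :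
    ∃ g : Euc N → Euc N, Continuous g ∧ HasCompactSupport g ∧ HasWeakGrad N u g ∧
      (∀ x v, ∑ i, v i * g x i = fderiv ℝ u x v) := by
  set g : Euc N → Euc N := fun x =>
    (EuclideanSpace.equiv (Fin N) ℝ).symm (fun i => fderiv ℝ u x (EuclideanSpace.single i 1))
    with hg
  have hgi : ∀ x i, g x i = fderiv ℝ u x (EuclideanSpace.single i 1) := fun x i => rfl
  have hsum : ∀ x v, ∑ i, v i * g x i = fderiv ℝ u x v := by
    intro x v
    have : ∑ i, v i * g x i = fderiv ℝ u x (∑ i, v i • EuclideanSpace.single i (1:ℝ)) := by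
      rw [map_sum]
      exact Finset.sum_congr rfl fun i _ => by rw [hgi, (fderiv ℝ u x).map_smul, smul_eq_mul]
    rw [this, sum_coord_smul_single]
  refine ⟨g, ?_, ?_, ?_, hsum⟩
  · apply (EuclideanSpace.equiv (Fin N) ℝ).symm.continuous.comp
    apply continuous_pi
    intro i
    exact (ContinuousLinearMap.apply ℝ ℝ (EuclideanSpace.single i (1:ℝ))).continuous.comp
      (hu.continuous_fderiv (by simp))
  · have : g = (fun L : Euc N →L[ℝ] ℝ =>
        (EuclideanSpace.equiv (Fin N) ℝ).symm (fun i => L (EuclideanSpace.single i 1)))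
          ∘ (fderiv ℝ u) := rfl
    rw [this]
    apply (hcu.fderiv ℝ).comp_left
    ext i
    rfl
  · intro i φ hφ hcφ
    rw [ibp (by simp) (by simp) hu hcu hφ hcφ (EuclideanSpace.single i 1)]
    rfl

lemma dirEnergy_bound {p : ℝ} (hp : 1 ≤ p) {u : Euc N → ℝ}
    (hu : ContDiff ℝ ((⊤:ℕ∞) : WithTop ℕ∞) u) (hcu : HasCompactSupport u) :
    ∃ C : ℝ≥0∞, C ≠ ⊤ ∧ ∀ σ : Euc N, ‖σ‖ ≤ 1 → dirEnergy N p u σ ≤ C := by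
  obtain ⟨g, hgc, hgcs, hgw, hgsum⟩ := grad_spec hu hcu
  obtain ⟨M, hM⟩ := (hcu.fderiv ℝ).exists_bound_of_continuous (hu.continuous_fderiv (by simp))
  set M' : ℝ := max M 0 with hM'
  have hM'0 : 0 ≤ M' := le_max_right _ _
  set K : Set (Euc N) := tsupport u with hK
  have hKm : MeasurableSet K := (isClosed_tsupport u).measurableSet
  have hKvol : volume K ≠ ⊤ := hcu.measure_lt_top.ne
  have hfb : ∀ (x : Euc N) (σ : Euc N), ‖σ‖ ≤ 1 → |fderiv ℝ u x σ| ≤ M' := by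
    intro x σ hσ
    calc |fderiv ℝ u x σ| ≤ ‖fderiv ℝ u x‖ * ‖σ‖ := (fderiv ℝ u x).le_opNorm σ
      _ ≤ M * 1 := by
          apply mul_le_mul (hM x) hσ (norm_nonneg _) ((norm_nonneg _).trans (hM x))
      _ ≤ M' := by simp [hM']
  have hzero : ∀ x ∉ K, fderiv ℝ u x = 0 := by
    intro x hx
    have := support_fderiv_subset (𝕜 := ℝ) (f := u)
    by_contra hne
    exact hx (this (by simpa [Function.mem_support] using hne))
  by_cases hp1 : p = 1
  · refine ⟨ENNReal.ofReal (M' * (volume K).toReal), ENNReal.ofReal_ne_top, fun σ hσ => ?_⟩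
    rw [dirEnergy, if_pos hp1, dirVar]
    apply iSup_le
    rintro ⟨φ, hφ, hcφ, hφb⟩
    apply ENNReal.ofReal_le_ofReal
    rw [ibp (by simp) (by simp) hu hcu hφ hcφ σ]
    have hb : ∀ x, ‖φ x * fderiv ℝ u x σ‖ ≤ K.indicator (fun _ => M') x := by
      intro x
      by_cases hx : x ∈ K
      · rw [Set.indicator_of_mem hx]
        calc ‖φ x * fderiv ℝ u x σ‖ = |φ x| * |fderiv ℝ u x σ| := abs_mul _ _
          _ ≤ 1 * M' := mul_le_mul (hφb x) (hfb x σ hσ) (abs_nonneg _) zero_le_one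
          _ = M' := one_mul _
      · rw [Set.indicator_of_notMem hx, hzero x hx]; simp
    have hint : Integrable (K.indicator (fun _ => M')) (volume : Measure (Euc N)) :=
      (integrable_indicator_iff hKm).2 (integrableOn_const hKvol)
    calc - ∫ x, φ x * fderiv ℝ u x σ ≤ ‖∫ x, φ x * fderiv ℝ u x σ‖ := by
          rw [Real.norm_eq_abs]; exact neg_le_abs _
      _ ≤ ∫ x, K.indicator (fun _ => M') x := by
          apply norm_integral_le_of_norm_le hint (Filter.Eventually.of_forall hb)
      _ = M' * (volume K).toReal := by
          rw [integral_indicator_const _ hKm, smul_eq_mul, mul_comm]; rfl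
  · refine ⟨ENNReal.ofReal (M' ^ p) * volume K, ENNReal.mul_ne_top ENNReal.ofReal_ne_top hKvol,
      fun σ hσ => ?_⟩
    rw [dirEnergy, if_neg hp1]
    refine le_trans (sInf_le ⟨g, hgc.memLp_of_hasCompactSupport hgcs, hgw, rfl⟩) ?_
    have hpt : ∀ x, ENNReal.ofReal (|∑ i, σ i * g x i| ^ p)
        ≤ K.indicator (fun _ => ENNReal.ofReal (M' ^ p)) x := by
      intro x
      rw [hgsum x σ]
      by_cases hx : x ∈ K
      · rw [Set.indicator_of_mem hx]
        exact ENNReal.ofReal_le_ofReal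
          (Real.rpow_le_rpow (abs_nonneg _) (hfb x σ hσ) (by linarith))
      · rw [Set.indicator_of_notMem hx, hzero x hx]
        simp [Real.zero_rpow (by linarith : p ≠ 0)]
    calc ∫⁻ x, ENNReal.ofReal (|∑ i, σ i * g x i| ^ p)
        ≤ ∫⁻ x, K.indicator (fun _ => ENNReal.ofReal (M' ^ p)) x := lintegral_mono hpt
      _ = ENNReal.ofReal (M' ^ p) * volume K := by
          rw [lintegral_indicator hKm]; simp

end Aux4
section Aux5
open Function
variable {N : ℕ}

lemma rpow_helper {s : ℝ} (hs : 0 < s) (p : ℝ) (N' : ℕ) :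
    s ^ (p - (N':ℝ)) = s ^ p * |((s:ℝ)^N')⁻¹| := by
  rw [abs_of_pos (by positivity), ← Real.rpow_natCast s N', ← Real.rpow_neg hs.le,
    ← Real.rpow_add hs, sub_eq_add_neg]

lemma ofReal_scale_split {s : ℝ} (hs : 0 < s) (p : ℝ) (N' : ℕ) :
    ENNReal.ofReal (s ^ (p - (N':ℝ)))
      = ENNReal.ofReal (s ^ p) * ENNReal.ofReal |((s:ℝ)^N')⁻¹| := by
  rw [rpow_helper hs p N', ENNReal.ofReal_mul (Real.rpow_nonneg hs.le p)]

/-- Key computation: scaling of the test integral. -/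
lemma integral_scale (u φ : Euc N → ℝ) (hφ : Differentiable ℝ φ) {s : ℝ} (hs : 0 < s)
    (v : Euc N) :
    ∫ x, u (s • x) * fderiv ℝ φ x v
      = (|((s:ℝ)^N)⁻¹| * s) * ∫ y, u y * fderiv ℝ (fun w => φ (s⁻¹ • w)) y v := by
  have hinv : ∀ x : Euc N, s⁻¹ • s • x = x := fun x => by
    rw [smul_smul, inv_mul_cancel₀ hs.ne', one_smul]
  set F : Euc N → ℝ := fun y => u y * fderiv ℝ φ (s⁻¹ • y) v with hF
  have h1 : ∀ x : Euc N, F (s • x) = u (s • x) * fderiv ℝ φ x v := by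
    intro x; rw [hF]; simp only [hinv]
  have h2 : ∫ x, u (s • x) * fderiv ℝ φ x v = ∫ x, F (s • x) := by
    exact integral_congr_ae (Filter.Eventually.of_forall fun x => (h1 x).symm)
  have h3 : ∫ x, F (s • x) = |((s:ℝ)^N)⁻¹| • ∫ y, F y := by
    have := MeasureTheory.Measure.integral_comp_smul (volume : Measure (Euc N)) F s
    rwa [finrank_euclideanSpace_fin] at this
  have h4 : ∀ y : Euc N, F y = s * (u y * fderiv ℝ (fun w => φ (s⁻¹ • w)) y v) := by
    intro y
    rw [fderiv_comp_smul' hφ s⁻¹ y v, hF]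
    field_simp
  rw [h2, h3]
  simp only [h4]
  rw [MeasureTheory.integral_const_mul, smul_eq_mul]
  ring

lemma dirEnergy_smul_le {p : ℝ} (hp : 1 ≤ p) (u : Euc N → ℝ) (σ : Euc N) {s : ℝ}
    (hs : 0 < s) :
    dirEnergy N p (fun x => u (s • x)) σ
      ≤ ENNReal.ofReal (s ^ (p - (N:ℝ))) * dirEnergy N p u σ := by
  have hinv : ∀ x : Euc N, s⁻¹ • s • x = x := fun x => by
    rw [smul_smul, inv_mul_cancel₀ hs.ne', one_smul]
  set c : ℝ≥0∞ := ENNReal.ofReal (s ^ (p - (N:ℝ))) with hc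
  have hc0 : c ≠ 0 := (ENNReal.ofReal_pos.2 (Real.rpow_pos_of_pos hs _)).ne'
  have hct : c ≠ ⊤ := ENNReal.ofReal_ne_top
  by_cases hp1 : p = 1
  · subst hp1
    rw [dirEnergy, dirEnergy, if_pos rfl, if_pos rfl, dirVar, dirVar]
    apply iSup_le
    rintro ⟨φ, hφ, hcφ, hφb⟩
    have hψ : ContDiff ℝ (⊤ : ℕ∞) (fun w : Euc N => φ (s⁻¹ • w)) := contDiff_comp_smul hφ s⁻¹
    have hcψ : HasCompactSupport (fun w : Euc N => φ (s⁻¹ • w)) :=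
      hcs_comp_smul hcφ (inv_ne_zero hs.ne')
    have hψb : ∀ x, |(fun w : Euc N => φ (s⁻¹ • w)) x| ≤ 1 := fun x => hφb _
    have key := integral_scale u φ (hφ.differentiable (by simp)) hs σ
    calc ENNReal.ofReal (∫ x, u (s • x) * fderiv ℝ φ x σ)
        = ENNReal.ofReal (|((s:ℝ)^N)⁻¹| * s) *
            ENNReal.ofReal (∫ y, u y * fderiv ℝ (fun w => φ (s⁻¹ • w)) y σ) := by
          rw [key, ENNReal.ofReal_mul (by positivity)]
      _ ≤ c * ⨆ ψ : {ψ : Euc N → ℝ // ContDiff ℝ (⊤ : ℕ∞) ψ ∧ HasCompactSupport ψ ∧ ∀ x, |ψ x| ≤ 1},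
            ENNReal.ofReal (∫ x, u x * fderiv ℝ (ψ : Euc N → ℝ) x σ) := by
          apply mul_le_mul'
          · apply le_of_eq
            rw [hc, ofReal_scale_split hs 1 N, Real.rpow_one, mul_comm,
              ENNReal.ofReal_mul hs.le]
          · exact le_iSup (fun ψ : {ψ : Euc N → ℝ // ContDiff ℝ (⊤ : ℕ∞) ψ ∧ HasCompactSupport ψ ∧
              ∀ x, |ψ x| ≤ 1} => ENNReal.ofReal (∫ x, u x * fderiv ℝ (ψ : Euc N → ℝ) x σ))
              ⟨fun w => φ (s⁻¹ • w), hψ, hcψ, hψb⟩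
  · rw [dirEnergy, dirEnergy, if_neg hp1, if_neg hp1]
    rw [mul_comm, ← ENNReal.div_le_iff_le_mul (Or.inl hc0) (Or.inl hct)]
    apply le_sInf
    rintro m ⟨g, hgm, hgw, rfl⟩
    rw [ENNReal.div_le_iff_le_mul (Or.inl hc0) (Or.inl hct), mul_comm]
    apply sInf_le
    refine ⟨fun x => s • g (s • x), ?_, ?_, ?_⟩
    · -- Memℒp
      have hmap : Measure.map (fun x : Euc N => s • x) volume
          = ENNReal.ofReal |((s:ℝ) ^ N)⁻¹| • volume := by
        rw [Measure.map_addHaar_smul (volume : Measure (Euc N)) hs.ne']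
        rw [finrank_euclideanSpace_fin]
      have hsm : AEStronglyMeasurable g (Measure.map (fun x : Euc N => s • x) volume) := by
        rw [hmap]
        exact hgm.1.mono_ac Measure.smul_absolutelyContinuous
      have h1 : MemLp g (ENNReal.ofReal p) (Measure.map (fun x : Euc N => s • x) volume) := by
        rw [hmap]
        exact hgm.smul_measure ENNReal.ofReal_ne_top
      have h2 : MemLp (g ∘ fun x : Euc N => s • x) (ENNReal.ofReal p) volume :=
        (memLp_map_measure_iff hsm (measurable_const_smul s).aemeasurable).1 h1
      exact h2.const_smul s
    · -- HasWeakGrad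
      intro i φ hφ hcφ
      have hψ : ContDiff ℝ (⊤ : ℕ∞) (fun w : Euc N => φ (s⁻¹ • w)) := contDiff_comp_smul hφ s⁻¹
      have hcψ : HasCompactSupport (fun w : Euc N => φ (s⁻¹ • w)) :=
        hcs_comp_smul hcφ (inv_ne_zero hs.ne')
      have key := integral_scale u φ (hφ.differentiable (by simp)) hs (EuclideanSpace.single i 1)
      rw [key, hgw i _ hψ hcψ]
      -- now RHS: - ∫ φ x * (s • g (s • x)) i
      have hG : ∀ x : Euc N, φ x * (s • g (s • x)) i
          = (fun y => (fun w => φ (s⁻¹ • w)) y * (s * g y i)) (s • x) := by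
        intro x
        simp only [hinv]
        rfl
      have h5 : ∫ x, φ x * (s • g (s • x)) i
          = |((s:ℝ)^N)⁻¹| • ∫ y, (fun w => φ (s⁻¹ • w)) y * (s * g y i) := by
        rw [integral_congr_ae (Filter.Eventually.of_forall hG)]
        have := MeasureTheory.Measure.integral_comp_smul (volume : Measure (Euc N))
          (fun y => (fun w => φ (s⁻¹ • w)) y * (s * g y i)) s
        rwa [finrank_euclideanSpace_fin] at this
      rw [h5]
      have h6 : ∀ y : Euc N, (fun w => φ (s⁻¹ • w)) y * (s * g y i)
          = s * ((fun w => φ (s⁻¹ • w)) y * g y i) := fun y => by ring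
      simp only [h6]
      rw [MeasureTheory.integral_const_mul, smul_eq_mul]
      ring
    · -- value
      symm
      have hpt : ∀ x : Euc N, ENNReal.ofReal (|∑ i, σ i * (s • g (s • x)) i| ^ p)
          = ENNReal.ofReal (s ^ p) *
            (fun w => ENNReal.ofReal (|∑ i, σ i * g w i| ^ p)) (s • x) := by
        intro x
        have e1 : ∑ i, σ i * (s • g (s • x)) i = s * ∑ i, σ i * g (s • x) i := by
          rw [Finset.mul_sum]
          exact Finset.sum_congr rfl fun i _ => by
            have : (s • g (s • x)) i = s * g (s • x) i := rfl
            rw [this]; ring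
        rw [e1, abs_mul, abs_of_pos hs,
          Real.mul_rpow hs.le (abs_nonneg _),
          ENNReal.ofReal_mul (Real.rpow_nonneg hs.le p)]
      calc ∫⁻ x, ENNReal.ofReal (|∑ i, σ i * (s • g (s • x)) i| ^ p)
          = ∫⁻ x, ENNReal.ofReal (s ^ p) *
              (fun w => ENNReal.ofReal (|∑ i, σ i * g w i| ^ p)) (s • x) :=
            lintegral_congr hpt
        _ = ENNReal.ofReal (s ^ p) *
              ∫⁻ x, (fun w => ENNReal.ofReal (|∑ i, σ i * g w i| ^ p)) (s • x) :=
            lintegral_const_mul' _ _ ENNReal.ofReal_ne_top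
        _ = ENNReal.ofReal (s ^ p) * (ENNReal.ofReal |((s:ℝ)^N)⁻¹| *
              ∫⁻ w, ENNReal.ofReal (|∑ i, σ i * g w i| ^ p)) := by
            congr 1
            exact lint_comp_smul (fun w => ENNReal.ofReal (|∑ i, σ i * g w i| ^ p)) hs.ne'
        _ = c * ∫⁻ w, ENNReal.ofReal (|∑ i, σ i * g w i| ^ p) := by
            rw [hc, ofReal_scale_split hs p N, mul_assoc]

end Aux5
section Aux6
open Function
variable {N : ℕ}

lemma dirEnergy_smul_eq {p : ℝ} (hp : 1 ≤ p) (u : Euc N → ℝ) (σ : Euc N) {s : ℝ}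
    (hs : 0 < s) :
    dirEnergy N p (fun x => u (s • x)) σ
      = ENNReal.ofReal (s ^ (p - (N:ℝ))) * dirEnergy N p u σ := by
  set c : ℝ≥0∞ := ENNReal.ofReal (s ^ (p - (N:ℝ))) with hc
  have hc0 : c ≠ 0 := (ENNReal.ofReal_pos.2 (Real.rpow_pos_of_pos hs _)).ne'
  have hct : c ≠ ⊤ := ENNReal.ofReal_ne_top
  apply le_antisymm (dirEnergy_smul_le hp u σ hs)
  have h1 := dirEnergy_smul_le hp (fun x => u (s • x)) σ (inv_pos.2 hs)
  have h2 : (fun x : Euc N => (fun x => u (s • x)) (s⁻¹ • x)) = u := by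
    funext x
    simp only [smul_smul, mul_inv_cancel₀ hs.ne', one_smul]
  rw [h2] at h1
  have h3 : ENNReal.ofReal (s⁻¹ ^ (p - (N:ℝ))) = c⁻¹ := by
    rw [Real.inv_rpow hs.le, hc,
      ENNReal.ofReal_inv_of_pos (Real.rpow_pos_of_pos hs _)]
  rw [h3] at h1
  calc c * dirEnergy N p u σ
      ≤ c * (c⁻¹ * dirEnergy N p (fun x => u (s • x)) σ) := mul_le_mul_right h1 c
    _ = (c * c⁻¹) * dirEnergy N p (fun x => u (s • x)) σ := (mul_assoc _ _ _).symm
    _ = dirEnergy N p (fun x => u (s • x)) σ := by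
        rw [ENNReal.mul_inv_cancel hc0 hct, one_mul]

lemma tdiff_measurable_s12 {p : ℝ} (hp : 0 ≤ p) {u : Euc N → ℝ} (hu : Continuous u) :
    Measurable (fun z : Euc N => tdiff N p u z) := by
  have hcont : Continuous (fun q : Euc N × Euc N =>
      ENNReal.ofReal (|u (q.2 + q.1) - u q.2| ^ p)) := by
    apply ENNReal.continuous_ofReal.comp
    apply Continuous.rpow_const
    · exact ((hu.comp (continuous_snd.add continuous_fst)).sub
        (hu.comp continuous_snd)).abs
    · exact fun x => Or.inr hp
  exact Measurable.lintegral_prod_right (f := fun z x =>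
    ENNReal.ofReal (|u (x + z) - u x| ^ p)) hcont.measurable

lemma tdiff_bump_pos {p : ℝ} (hp : 1 ≤ p) (f : ContDiffBump (0 : Euc N)) {z : Euc N}
    (hz : z ≠ 0) : 0 < tdiff N p (⇑f) z := by
  have hz0 : 0 < ‖z‖ := norm_pos_iff.2 hz
  set t : ℝ := max f.rOut ‖z‖ with ht
  have ht0 : 0 < t := lt_of_lt_of_le f.rOut_pos (le_max_left _ _)
  set x₀ : Euc N := -((t / ‖z‖) • z) with hx₀
  have hnx₀ : ‖x₀‖ = t := by
    rw [hx₀, norm_neg, norm_smul, Real.norm_eq_abs, abs_of_pos (div_pos ht0 hz0)]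
    field_simp
  have hsum : x₀ + z = (1 - t / ‖z‖) • z := by
    rw [hx₀, sub_smul, one_smul]
    abel
  have hnsum : ‖x₀ + z‖ = t - ‖z‖ := by
    rw [hsum, norm_smul, Real.norm_eq_abs]
    have htz : ‖z‖ ≤ t := le_max_right _ _
    rw [abs_of_nonpos (by rw [sub_nonpos, le_div_iff₀ hz0, one_mul]; exact htz)]
    field_simp
    ring
  have hlt : ‖x₀ + z‖ < f.rOut := by
    rw [hnsum, ht]
    rcases le_total ‖z‖ f.rOut with h | h
    · rw [max_eq_left h]; linarith [f.rOut_pos]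
    · rw [max_eq_right h]; linarith [f.rOut_pos]
  have hval0 : f x₀ = 0 := by
    have : x₀ ∉ Function.support ⇑f := by
      rw [f.support_eq, Metric.mem_ball, dist_zero_right, hnx₀]
      exact not_lt.2 (le_max_left _ _)
    simpa [Function.mem_support, not_not] using this
  have hvalpos : 0 < f (x₀ + z) := by
    apply f.pos_of_mem_ball
    rw [Metric.mem_ball, dist_zero_right]
    exact hlt
  set d : ℝ := f (x₀ + z) with hd
  have hwc : Continuous (fun x : Euc N => |f (x + z) - f x|) := by
    exact ((f.continuous.comp (continuous_id.add continuous_const)).sub f.continuous).abs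
  set U : Set (Euc N) := (fun x : Euc N => |f (x + z) - f x|) ⁻¹' (Set.Ioi (d / 2)) with hU
  have hUopen : IsOpen U := isOpen_Ioi.preimage hwc
  have hx₀U : x₀ ∈ U := by
    rw [hU, Set.mem_preimage, Set.mem_Ioi, hval0, sub_zero, abs_of_pos hvalpos]
    linarith
  have hvolU : 0 < volume U := hUopen.measure_pos volume ⟨x₀, hx₀U⟩
  have hd2 : 0 < (d / 2) ^ p := Real.rpow_pos_of_pos (by linarith) p
  calc (0:ℝ≥0∞) < ENNReal.ofReal ((d / 2) ^ p) * volume U :=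
        ENNReal.mul_pos (ENNReal.ofReal_pos.2 hd2).ne' hvolU.ne'
    _ = ∫⁻ _ in U, ENNReal.ofReal ((d / 2) ^ p) := (setLIntegral_const U _).symm
    _ ≤ ∫⁻ x in U, ENNReal.ofReal (|f (x + z) - f x| ^ p) := by
        apply setLIntegral_mono' hUopen.measurableSet
        intro x hx
        apply ENNReal.ofReal_le_ofReal
        apply Real.rpow_le_rpow (by positivity) (le_of_lt hx) (by linarith)
    _ ≤ tdiff N p (⇑f) z := setLIntegral_le_lintegral _ _

end Aux6

section Statements

/-- **Identification of the singular part (Lemma 2.9).**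
If `𝒢_p^{μ,ν} = 𝒢_p^{λ,αδ₀}` on all compactly supported Lipschitz functions, then
`ν = βδ₀` for some `β ≥ 0`. -/
theorem singular_part_is_dirac
    (N : ℕ) (hN : 1 ≤ N) (p : ℝ) (hp : 1 ≤ p)
    (lam mu : Measure (Metric.sphere (0 : Euc N) 1))
    (hlam : IsFiniteMeasure lam) (hmu : IsFiniteMeasure mu)
    (ν : Measure (Euc N)) (hν : IsFiniteMeasure ν)
    (α : ℝ) (hα : 0 ≤ α)
    (heq : ∀ u : Euc N → ℝ, (∃ c : ℝ≥0, LipschitzWith c u) → HasCompactSupport u →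
      Gmunu N p mu ν u =
        Gmunu N p lam (ENNReal.ofReal α • Measure.dirac (0 : Euc N)) u) :
    ∃ β : ℝ, 0 ≤ β ∧ ν = ENNReal.ofReal β • Measure.dirac (0 : Euc N) := by
  classical
  haveI := hlam; haveI := hmu; haveI := hν
  have hp0 : (0:ℝ) < p := lt_of_lt_of_le one_pos hp
  -- the bump function
  set f : ContDiffBump (0 : Euc N) := ⟨1, 2, one_pos, one_lt_two⟩ with hf
  set u : Euc N → ℝ := ⇑f with hu_def
  have hu : ContDiff ℝ ((⊤:ℕ∞) : WithTop ℕ∞) u := f.contDiff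
  have hcu : HasCompactSupport u := f.hasCompactSupport
  -- simplified form of the hypothesis
  have heq' : ∀ v : Euc N → ℝ, (∃ c : ℝ≥0, LipschitzWith c v) → HasCompactSupport v →
      (∫⁻ σ, dirEnergy N p v ↑σ ∂mu) +
        (∫⁻ z in {(0:Euc N)}ᶜ, tdiff N p v z * (ENNReal.ofReal (‖z‖ ^ p))⁻¹ ∂ν)
      = ∫⁻ σ, dirEnergy N p v ↑σ ∂lam := by
    intro v h1 h2
    have h3 := heq v h1 h2
    simp only [Gmunu] at h3
    have h0 : (∫⁻ z in {(0:Euc N)}ᶜ, tdiff N p v z * (ENNReal.ofReal (‖z‖ ^ p))⁻¹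
        ∂(ENNReal.ofReal α • Measure.dirac (0 : Euc N))) = 0 := by
      have hd : (Measure.dirac (0:Euc N)).restrict {(0:Euc N)}ᶜ = 0 := by
        rw [Measure.restrict_eq_zero]
        simp [Measure.dirac_apply' _ (measurableSet_singleton (0:Euc N)).compl]
      rw [Measure.restrict_smul, hd, smul_zero, lintegral_zero_measure]
    rw [h0, add_zero] at h3
    exact h3
  -- finiteness of the directional energies
  obtain ⟨C, hCt, hC⟩ := dirEnergy_bound hp hu hcu
  have hsphere : ∀ σ : Metric.sphere (0 : Euc N) 1, ‖(σ : Euc N)‖ ≤ 1 := by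
    intro σ
    have := σ.2
    rw [Metric.mem_sphere, dist_zero_right] at this
    exact le_of_eq this
  have hA : (∫⁻ σ, dirEnergy N p u ↑σ ∂mu) ≠ ⊤ := by
    apply ne_of_lt
    calc (∫⁻ σ, dirEnergy N p u ↑σ ∂mu) ≤ ∫⁻ _, C ∂mu :=
          lintegral_mono fun σ => hC _ (hsphere σ)
      _ = C * mu Set.univ := by rw [lintegral_const]
      _ < ⊤ := ENNReal.mul_lt_top hCt.lt_top (measure_lt_top mu _)
  -- the rescaled quantities
  set G : ℝ → ℝ≥0∞ := fun s => ∫⁻ z in {(0:Euc N)}ᶜ,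
      tdiff N p u (s • z) * (ENNReal.ofReal (‖s • z‖ ^ p))⁻¹ ∂ν with hG
  have key : ∀ s : ℝ, 0 < s →
      (∫⁻ σ, dirEnergy N p u ↑σ ∂mu) + G s = ∫⁻ σ, dirEnergy N p u ↑σ ∂lam := by
    intro s hs
    set c : ℝ≥0∞ := ENNReal.ofReal (s ^ (p - (N:ℝ))) with hc
    have hc0 : c ≠ 0 := (ENNReal.ofReal_pos.2 (Real.rpow_pos_of_pos hs _)).ne'
    have hct : c ≠ ⊤ := ENNReal.ofReal_ne_top
    set us : Euc N → ℝ := fun x => u (s • x) with hus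
    have husC : ContDiff ℝ ((⊤:ℕ∞) : WithTop ℕ∞) us := contDiff_comp_smul hu s
    have huscs : HasCompactSupport us := hcs_comp_smul hcu hs.ne'
    have huslip : ∃ cl : ℝ≥0, LipschitzWith cl us :=
      husC.lipschitzWith_of_hasCompactSupport huscs (by simp)
    have hE := heq' us huslip huscs
    -- rewrite the three pieces
    have e1 : ∀ (κ : Measure (Metric.sphere (0 : Euc N) 1)),
        (∫⁻ σ, dirEnergy N p us ↑σ ∂κ) = c * ∫⁻ σ, dirEnergy N p u ↑σ ∂κ := by
      intro κ
      rw [← lintegral_const_mul' c _ hct]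
      exact lintegral_congr fun σ => dirEnergy_smul_eq hp u _ hs
    have e2 : (∫⁻ z in {(0:Euc N)}ᶜ, tdiff N p us z * (ENNReal.ofReal (‖z‖ ^ p))⁻¹ ∂ν)
        = c * G s := by
      rw [hG, ← lintegral_const_mul' c _ hct]
      apply lintegral_congr
      intro z
      by_cases hz : z = 0
      · subst hz
        rw [smul_zero, tdiff_zero hp0.ne', tdiff_zero hp0.ne']
        simp
      · have hzn : 0 < ‖z‖ := norm_pos_iff.2 hz
        have hsplit : ENNReal.ofReal (‖s • z‖ ^ p)
            = ENNReal.ofReal (s ^ p) * ENNReal.ofReal (‖z‖ ^ p) := by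
          rw [norm_smul, Real.norm_eq_abs, abs_of_pos hs,
            Real.mul_rpow hs.le (norm_nonneg z), ENNReal.ofReal_mul (Real.rpow_nonneg hs.le _)]
        have hinv : (ENNReal.ofReal (‖s • z‖ ^ p))⁻¹
            = (ENNReal.ofReal (s ^ p))⁻¹ * (ENNReal.ofReal (‖z‖ ^ p))⁻¹ := by
          rw [hsplit, ENNReal.mul_inv (Or.inr ENNReal.ofReal_ne_top)
            (Or.inl ENNReal.ofReal_ne_top)]
        have hX : c * (ENNReal.ofReal (s ^ p))⁻¹ = ENNReal.ofReal |((s:ℝ)^N)⁻¹| := by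
          rw [hc, ofReal_scale_split hs p N, mul_comm (ENNReal.ofReal (s ^ p)) _, mul_assoc,
            ENNReal.mul_inv_cancel (ENNReal.ofReal_pos.2 (Real.rpow_pos_of_pos hs _)).ne'
              ENNReal.ofReal_ne_top, mul_one]
        rw [tdiff_comp_smul p u hs.ne' z, hinv, ← hX]
        ring
    rw [e1 mu, e1 lam, e2, ← mul_add] at hE
    exact (ENNReal.mul_right_inj hc0 hct).1 hE
  -- `G` is constant
  have hconst : ∀ s : ℝ, 0 < s → G s = G 1 := by
    intro s hs
    have h1 := key s hs
    have h2 := key 1 one_pos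
    rw [← h2] at h1
    exact (ENNReal.add_right_inj hA).1 h1
  -- the limit of `G (n+1)` is zero
  obtain ⟨L, hL⟩ := hu.lipschitzWith_of_hasCompactSupport hcu (by simp)
  have hvolK : volume (tsupport u) ≠ ⊤ := hcu.measure_lt_top.ne
  have hbound_fin : ENNReal.ofReal ((L:ℝ) ^ p) * (2 * volume (tsupport u)) ≠ ⊤ :=
    ENNReal.mul_ne_top ENNReal.ofReal_ne_top
      (ENNReal.mul_ne_top (by simp) hvolK)
  have hub : ∀ x, |u x| ≤ 1 := by
    intro x
    rw [abs_of_nonneg f.nonneg]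
    exact f.le_one
  have hudiff : ∀ (w x : Euc N), |u (x + w) - u x| ≤ 1 := by
    intro w x
    have h1 : 0 ≤ u (x + w) := f.nonneg
    have h2 : u (x + w) ≤ 1 := f.le_one
    have h3 : 0 ≤ u x := f.nonneg
    have h4 : u x ≤ 1 := f.le_one
    rw [abs_le]
    constructor <;> linarith
  have hFle : ∀ (s : ℝ), 0 < s → ∀ z : Euc N,
      tdiff N p u (s • z) * (ENNReal.ofReal (‖s • z‖ ^ p))⁻¹
        ≤ ENNReal.ofReal ((L:ℝ) ^ p) * (2 * volume (tsupport u)) := by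
    intro s hs z
    by_cases hz : z = 0
    · subst hz
      rw [smul_zero, tdiff_zero hp0.ne' u, zero_mul]
      exact zero_le
    · set w : Euc N := s • z with hw
      have hwn : 0 < ‖w‖ := norm_pos_iff.2 (by
        rw [hw]; exact smul_ne_zero hs.ne' hz)
      have h1 : tdiff N p u w ≤ ENNReal.ofReal (((L:ℝ) * ‖w‖) ^ p) *
          (2 * volume (tsupport u)) := tdiff_le_lip hp hL hcu w
      have h2 : ENNReal.ofReal (((L:ℝ) * ‖w‖) ^ p)
          = ENNReal.ofReal ((L:ℝ) ^ p) * ENNReal.ofReal (‖w‖ ^ p) := by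
        rw [Real.mul_rpow (by positivity) hwn.le,
          ENNReal.ofReal_mul (Real.rpow_nonneg (by positivity) _)]
      calc tdiff N p u w * (ENNReal.ofReal (‖w‖ ^ p))⁻¹
          ≤ (ENNReal.ofReal ((L:ℝ) ^ p) * ENNReal.ofReal (‖w‖ ^ p) *
              (2 * volume (tsupport u))) * (ENNReal.ofReal (‖w‖ ^ p))⁻¹ := by
            apply mul_le_mul_left
            rw [← h2]; exact h1
        _ = (ENNReal.ofReal ((L:ℝ) ^ p) * (2 * volume (tsupport u))) *
              (ENNReal.ofReal (‖w‖ ^ p) * (ENNReal.ofReal (‖w‖ ^ p))⁻¹) := by ring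
        _ ≤ (ENNReal.ofReal ((L:ℝ) ^ p) * (2 * volume (tsupport u))) * 1 :=
            mul_le_mul_right (ENNReal.mul_inv_le_one _) _
        _ = ENNReal.ofReal ((L:ℝ) ^ p) * (2 * volume (tsupport u)) := mul_one _
  have hFmeas : ∀ s : ℝ, Measurable (fun z : Euc N =>
      tdiff N p u (s • z) * (ENNReal.ofReal (‖s • z‖ ^ p))⁻¹) := by
    intro s
    apply Measurable.mul
    · exact (tdiff_measurable_s12 hp0.le hu.continuous).comp (measurable_const_smul s)
    · apply Measurable.inv
      apply Measurable.ennreal_ofReal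
      apply Continuous.measurable
      exact ((continuous_const_smul s).norm).rpow_const (fun x => Or.inr hp0.le)
  -- uniform smallness bound
  have hKbd : ∀ z : Euc N, ∀ s : ℝ, 0 < s →
      tdiff N p u (s • z) * (ENNReal.ofReal (‖s • z‖ ^ p))⁻¹
        ≤ (2 * volume (tsupport u)) * (ENNReal.ofReal (‖s • z‖ ^ p))⁻¹ := by
    intro z s hs
    apply mul_le_mul_left
    have := tdiff_le_of_bound hp hcu (s • z) (zero_le_one) (hudiff (s • z))
    simpa [Real.one_rpow] using this
  -- the limit is zero
  have hlim : Filter.Tendsto (fun n : ℕ => G ((n:ℝ) + 1)) Filter.atTop (𝓝 0) := by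
    have h0 : (0:ℝ≥0∞) = ∫⁻ _ in {(0:Euc N)}ᶜ, (0:ℝ≥0∞) ∂ν := by simp
    rw [h0]
    apply tendsto_lintegral_of_dominated_convergence
      (fun _ => ENNReal.ofReal ((L:ℝ) ^ p) * (2 * volume (tsupport u)))
    · intro n; exact hFmeas _
    · intro n
      apply Filter.Eventually.of_forall
      intro z
      exact hFle _ (by positivity) z
    · rw [lintegral_const]
      exact ENNReal.mul_ne_top hbound_fin (measure_ne_top _ _)
    · -- pointwise convergence to 0
      apply (ae_restrict_iff' (measurableSet_singleton (0:Euc N)).compl).2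
      apply Filter.Eventually.of_forall
      intro z hz
      have hzn : 0 < ‖z‖ := norm_pos_iff.2 hz
      have hbd : ∀ n : ℕ, tdiff N p u (((n:ℝ)+1) • z) *
          (ENNReal.ofReal (‖((n:ℝ)+1) • z‖ ^ p))⁻¹
          ≤ ((2 * volume (tsupport u)) * (ENNReal.ofReal (‖z‖ ^ p))⁻¹) * ((n+1 : ℕ) : ℝ≥0∞)⁻¹ := by
        intro n
        have hs : (0:ℝ) < (n:ℝ) + 1 := by positivity
        refine le_trans (hKbd z _ hs) ?_
        have h1 : ((n:ℝ)+1) * ‖z‖ ^ p ≤ ‖((n:ℝ)+1) • z‖ ^ p := by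
          rw [norm_smul, Real.norm_eq_abs, abs_of_pos hs,
            Real.mul_rpow hs.le hzn.le]
          apply mul_le_mul_of_nonneg_right _ (Real.rpow_nonneg hzn.le p)
          calc ((n:ℝ)+1) = ((n:ℝ)+1) ^ (1:ℝ) := (Real.rpow_one _).symm
            _ ≤ ((n:ℝ)+1) ^ p := Real.rpow_le_rpow_of_exponent_le (by linarith) hp
        have h2 : (ENNReal.ofReal (‖((n:ℝ)+1) • z‖ ^ p))⁻¹
            ≤ (ENNReal.ofReal (((n:ℝ)+1) * ‖z‖ ^ p))⁻¹ :=
          ENNReal.inv_le_inv.2 (ENNReal.ofReal_le_ofReal h1)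
        have h3 : ENNReal.ofReal (((n:ℝ)+1) * ‖z‖ ^ p)
            = ((n+1 : ℕ) : ℝ≥0∞) * ENNReal.ofReal (‖z‖ ^ p) := by
          rw [ENNReal.ofReal_mul (by positivity)]
          congr 1
          rw [← ENNReal.ofReal_natCast (n+1)]
          congr 1
          push_cast
          ring
        have h4 : (ENNReal.ofReal (((n:ℝ)+1) * ‖z‖ ^ p))⁻¹
            = ((n+1 : ℕ) : ℝ≥0∞)⁻¹ * (ENNReal.ofReal (‖z‖ ^ p))⁻¹ := by
          rw [h3, ENNReal.mul_inv (Or.inl (by simp)) (Or.inl (by simp))]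
        calc (2 * volume (tsupport u)) * (ENNReal.ofReal (‖((n:ℝ)+1) • z‖ ^ p))⁻¹
            ≤ (2 * volume (tsupport u)) * (ENNReal.ofReal (((n:ℝ)+1) * ‖z‖ ^ p))⁻¹ :=
              mul_le_mul_right h2 _
          _ = ((2 * volume (tsupport u)) * (ENNReal.ofReal (‖z‖ ^ p))⁻¹) *
              ((n+1 : ℕ) : ℝ≥0∞)⁻¹ := by rw [h4]; ring
      have hDfin : ((2 * volume (tsupport u)) * (ENNReal.ofReal (‖z‖ ^ p))⁻¹) ≠ ⊤ := by
        apply ENNReal.mul_ne_top (ENNReal.mul_ne_top (by simp) hvolK)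
        rw [ENNReal.inv_ne_top]
        exact (ENNReal.ofReal_pos.2 (Real.rpow_pos_of_pos hzn p)).ne'
      have hmajlim : Filter.Tendsto (fun n : ℕ =>
          ((2 * volume (tsupport u)) * (ENNReal.ofReal (‖z‖ ^ p))⁻¹) * ((n+1 : ℕ) : ℝ≥0∞)⁻¹)
          Filter.atTop (𝓝 0) := by
        have h5 : Filter.Tendsto (fun n : ℕ => ((n+1 : ℕ) : ℝ≥0∞)⁻¹) Filter.atTop (𝓝 0) :=
          ENNReal.tendsto_inv_nat_nhds_zero.comp (Filter.tendsto_add_atTop_nat 1)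
        have h6 := ENNReal.Tendsto.const_mul h5
          (Or.inr hDfin)
        simpa using h6
      apply tendsto_of_tendsto_of_tendsto_of_le_of_le tendsto_const_nhds hmajlim
        (fun n => zero_le) hbd
  -- conclude `G 1 = 0`
  have hG1 : G 1 = 0 := by
    have hcexact : ∀ n : ℕ, G ((n:ℝ) + 1) = G 1 := fun n => hconst _ (by positivity)
    have : Filter.Tendsto (fun _ : ℕ => G 1) Filter.atTop (𝓝 0) := by
      simpa only [hcexact] using hlim
    exact tendsto_nhds_unique tendsto_const_nhds this
  -- positivity forces the measure to vanish away from zero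
  have hnu0 : ν {(0:Euc N)}ᶜ = 0 := by
    have hGm : Measurable (fun z : Euc N =>
        tdiff N p u ((1:ℝ) • z) * (ENNReal.ofReal (‖(1:ℝ) • z‖ ^ p))⁻¹) := hFmeas 1
    have := (lintegral_eq_zero_iff hGm).1 hG1
    rw [Filter.EventuallyEq, ae_iff] at this
    have hsub : {(0:Euc N)}ᶜ ⊆ {z : Euc N | ¬ (tdiff N p u ((1:ℝ) • z) *
        (ENNReal.ofReal (‖(1:ℝ) • z‖ ^ p))⁻¹ = (0:Euc N → ℝ≥0∞) z)} := by
      intro z hz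
      simp only [Set.mem_setOf_eq, Pi.zero_apply, one_smul]
      intro habs
      have h1 : tdiff N p u z ≠ 0 := (tdiff_bump_pos hp f hz).ne'
      have h2 : (ENNReal.ofReal (‖z‖ ^ p))⁻¹ ≠ 0 := by
        rw [ENNReal.inv_ne_zero]
        exact ENNReal.ofReal_ne_top
      exact (mul_ne_zero h1 h2) habs
    have h7 : (ν.restrict {(0:Euc N)}ᶜ) {(0:Euc N)}ᶜ = 0 := by
      apply measure_mono_null hsub this
    rwa [Measure.restrict_apply_self] at h7
  -- final identification
  refine ⟨(ν {(0:Euc N)}).toReal, ENNReal.toReal_nonneg, ?_⟩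
  ext s hs
  have hsplit : ν s = ν (s ∩ {(0:Euc N)}) + ν (s \ {(0:Euc N)}) :=
    (measure_inter_add_diff s (measurableSet_singleton (0:Euc N))).symm
  have hdiff : ν (s \ {(0:Euc N)}) = 0 :=
    measure_mono_null (Set.diff_subset_compl _ _) hnu0
  rw [Measure.smul_apply, Measure.dirac_apply' _ hs, smul_eq_mul]
  by_cases h0 : (0:Euc N) ∈ s
  · have hint : s ∩ {(0:Euc N)} = {(0:Euc N)} :=
      Set.inter_eq_self_of_subset_right (Set.singleton_subset_iff.2 h0)
    rw [hsplit, hdiff, add_zero, hint, Set.indicator_of_mem h0,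
      ENNReal.ofReal_toReal (measure_ne_top ν _)]
    simp
  · have hint : s ∩ {(0:Euc N)} = ∅ := by
      ext x
      simp only [Set.mem_inter_iff, Set.mem_singleton_iff, Set.mem_empty_iff_false, iff_false,
        not_and]
      rintro hxs rfl
      exact h0 hxs
    rw [hsplit, hdiff, add_zero, hint, Set.indicator_of_notMem h0]
    simp


end Statements
end

section
/- Let N ≥ 1 and p ∈ [1,∞). If G ∈ L¹(ℝ^N) is a non-negative function, then for every u ∈ L^p(ℝ^N) one has ∫_{ℝ^N} ‖u(·+z) − u‖_{L^p}^p (G*G)(z) dz ≤ 2^p ‖G‖_{L¹} ∫_{ℝ^N} ‖u(·+z) − u‖_{L^p}^p G(z) dz. -/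
open MeasureTheory Filter Topology Metric
open scoped ENNReal NNReal RealInnerProductSpace

section Statements

private lemma cte_pointwise {p : ℝ} (hp : 1 ≤ p) (a b c : ℝ) :
    ENNReal.ofReal (|a - c| ^ p) ≤
      (2 : ℝ≥0∞) ^ (p - 1) *
        (ENNReal.ofReal (|a - b| ^ p) + ENNReal.ofReal (|b - c| ^ p)) := by
  have hp0 : (0:ℝ) ≤ p := zero_le_one.trans hp
  have e : ∀ x : ℝ, ENNReal.ofReal (|x| ^ p) = ENNReal.ofReal |x| ^ p := fun x =>
    (ENNReal.ofReal_rpow_of_nonneg (abs_nonneg x) hp0).symm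
  rw [e, e, e]
  calc ENNReal.ofReal |a - c| ^ p
      ≤ (ENNReal.ofReal |a - b| + ENNReal.ofReal |b - c|) ^ p := by
        refine ENNReal.rpow_le_rpow ?_ hp0
        rw [← ENNReal.ofReal_add (abs_nonneg _) (abs_nonneg _)]
        exact ENNReal.ofReal_le_ofReal (abs_sub_le a b c)
    _ ≤ _ := ENNReal.rpow_add_le_mul_rpow_add_rpow _ _ hp

set_option maxHeartbeats 1600000 in
/-- **Convolution estimate (Lemma 4.4).**
For non-negative `G ∈ L¹(ℝ^N)` and `u ∈ L^p(ℝ^N)`,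
`∫ ‖u(⬝+z) - u‖_{L^p}^p (G*G)(z) dz ≤ 2^p ‖G‖_{L¹} ∫ ‖u(⬝+z) - u‖_{L^p}^p G(z) dz`. -/
theorem convolution_translation_estimate
    (N : ℕ) (hN : 1 ≤ N) (p : ℝ) (hp : 1 ≤ p)
    (G : Euc N → ℝ) (hG0 : ∀ x, 0 ≤ G x) (hG1 : Integrable G volume)
    (u : Euc N → ℝ) (hu : MemLp u (ENNReal.ofReal p) volume) :
    (∫⁻ z, tdiff N p u z * ENNReal.ofReal (∫ w, G (z - w) * G w)) ≤
      ENNReal.ofReal (2 ^ p) * ENNReal.ofReal (∫ x, G x) *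
        ∫⁻ z, tdiff N p u z * ENNReal.ofReal (G z) := by
  classical
  have hp0 : (0:ℝ) ≤ p := zero_le_one.trans hp
  set c : ℝ≥0∞ := (2 : ℝ≥0∞) ^ (p - 1) with hc
  obtain ⟨v, hvm, huv⟩ : ∃ v : Euc N → ℝ, Measurable v ∧ u =ᵐ[volume] v :=
    ⟨hu.1.mk u, hu.1.stronglyMeasurable_mk.measurable, hu.1.ae_eq_mk⟩
  obtain ⟨G', hG'm, hGG'⟩ : ∃ G' : Euc N → ℝ, Measurable G' ∧ G =ᵐ[volume] G' :=
    ⟨hG1.1.mk G, hG1.1.stronglyMeasurable_mk.measurable, hG1.1.ae_eq_mk⟩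
  set T : Euc N → ℝ≥0∞ := fun z => ∫⁻ x, ENNReal.ofReal (|v (x + z) - v x| ^ p) with hTdef
  set Ge : Euc N → ℝ≥0∞ := fun x => ENNReal.ofReal (G' x) with hGedef
  have hGe : Measurable Ge := hG'm.ennreal_ofReal
  have mm : ∀ {α : Type} [MeasurableSpace α] (f g : α → Euc N), Measurable f → Measurable g →
      Measurable fun x : α => ENNReal.ofReal (|v (f x) - v (g x)| ^ p) := by
    intro α _ f g hf hg
    exact (((hvm.comp hf).sub (hvm.comp hg)).abs.pow measurable_const).ennreal_ofReal
  have hTm : Measurable T := by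
    have : Measurable fun q : Euc N × Euc N => ENNReal.ofReal (|v (q.2 + q.1) - v q.2| ^ p) :=
      mm _ _ (measurable_snd.add measurable_fst) measurable_snd
    exact this.lintegral_prod_right'
  have htdiff : ∀ z, tdiff N p u z = T z := by
    intro z
    show (∫⁻ x, ENNReal.ofReal (|u (x + z) - u x| ^ p)) = T z
    refine lintegral_congr_ae ?_
    have h1 : (u ∘ fun x => x + z) =ᵐ[volume] (v ∘ fun x => x + z) :=
      ((measurePreserving_add_right (volume : Measure (Euc N))
        z).quasiMeasurePreserving).ae_eq_comp huv
    filter_upwards [h1, huv] with x hx hx'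
    simp only [Function.comp] at hx
    rw [hx, hx']
  have hTinv : ∀ w z : Euc N,
      (∫⁻ x, ENNReal.ofReal (|v (x + z) - v (x + w)| ^ p)) = T (z - w) := by
    intro w z
    have hfm : Measurable fun x : Euc N => ENNReal.ofReal (|v (x + (z - w)) - v x| ^ p) :=
      mm _ _ (measurable_id.add_const _) measurable_id
    have h := (measurePreserving_add_right (volume : Measure (Euc N)) w).lintegral_comp hfm
    calc (∫⁻ x, ENNReal.ofReal (|v (x + z) - v (x + w)| ^ p))
        = ∫⁻ x, ENNReal.ofReal (|v ((x + w) + (z - w)) - v (x + w)| ^ p) := by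
          refine lintegral_congr fun x => ?_
          rw [show x + w + (z - w) = x + z by abel]
      _ = T (z - w) := h
  have hbound : ∀ z w : Euc N, T z ≤ c * (T (z - w) + T w) := by
    intro z w
    have m1 : Measurable fun x : Euc N => ENNReal.ofReal (|v (x + z) - v (x + w)| ^ p) :=
      mm _ _ (measurable_id.add_const _) (measurable_id.add_const _)
    have m2 : Measurable fun x : Euc N => ENNReal.ofReal (|v (x + w) - v x| ^ p) :=
      mm _ _ (measurable_id.add_const _) measurable_id
    calc T z ≤ ∫⁻ x, c * (ENNReal.ofReal (|v (x + z) - v (x + w)| ^ p)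
          + ENNReal.ofReal (|v (x + w) - v x| ^ p)) :=
        lintegral_mono fun x => cte_pointwise hp _ _ _
      _ = c * ((∫⁻ x, ENNReal.ofReal (|v (x + z) - v (x + w)| ^ p)) + T w) := by
          rw [lintegral_const_mul c (show Measurable fun x => ENNReal.ofReal (|v (x + z) - v (x + w)| ^ p) + ENNReal.ofReal (|v (x + w) - v x| ^ p) from m1.add m2), lintegral_add_left m1]
      _ = c * (T (z - w) + T w) := by rw [hTinv]
  have key : ∀ z, tdiff N p u z * ENNReal.ofReal (∫ w, G (z - w) * G w)
      ≤ ∫⁻ w, T z * (Ge (z - w) * Ge w) := by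
    intro z
    have mg : Measurable fun w : Euc N => Ge (z - w) * Ge w :=
      (hGe.comp (measurable_const.sub measurable_id)).mul hGe
    rw [htdiff z, lintegral_const_mul (T z) mg]
    refine mul_le_mul_right ?_ _
    have haeq : (fun w => ENNReal.ofReal (G (z - w) * G w)) =ᵐ[volume]
        fun w => Ge (z - w) * Ge w := by
      have hs : (G ∘ fun w => z - w) =ᵐ[volume] (G' ∘ fun w => z - w) :=
        ((Measure.measurePreserving_sub_left (volume : Measure (Euc N))
          z).quasiMeasurePreserving).ae_eq_comp hGG'
      filter_upwards [hs, hGG'] with w h1 h2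
      simp only [Function.comp] at h1
      rw [ENNReal.ofReal_mul (hG0 _), h1, h2]
    by_cases h : Integrable (fun w => G (z - w) * G w) volume
    · rw [MeasureTheory.ofReal_integral_eq_lintegral_ofReal h
        (ae_of_all _ fun w => mul_nonneg (hG0 _) (hG0 _))]
      exact le_of_eq (lintegral_congr_ae haeq)
    · rw [integral_undef h]; simp
  set F : Euc N → Euc N → ℝ≥0∞ :=
    fun z w => T (z - w) * Ge (z - w) * Ge w + T w * (Ge (z - w) * Ge w) with hF
  have hFm : Measurable (Function.uncurry F) := by
    have h1 : Measurable fun q : Euc N × Euc N => q.1 - q.2 := measurable_fst.sub measurable_snd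
    exact (((hTm.comp h1).mul (hGe.comp h1)).mul (hGe.comp measurable_snd)).add
      ((hTm.comp measurable_snd).mul ((hGe.comp h1).mul (hGe.comp measurable_snd)))
  set NG : ℝ≥0∞ := ∫⁻ x, Ge x with hNG
  set I : ℝ≥0∞ := ∫⁻ z, T z * Ge z with hIdef
  have hJ : (∫⁻ z, ∫⁻ w, F z w) = 2 * (NG * I) := by
    rw [lintegral_lintegral_swap hFm.aemeasurable]
    have inner : ∀ w : Euc N, (∫⁻ z, F z w) = I * Ge w + T w * (NG * Ge w) := by
      intro w
      have hgm : Measurable fun y : Euc N => T y * Ge y * Ge w + T w * (Ge y * Ge w) :=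
        ((hTm.mul hGe).mul measurable_const).add (measurable_const.mul (hGe.mul measurable_const))
      have h := (measurePreserving_sub_right (volume : Measure (Euc N)) w).lintegral_comp hgm
      calc (∫⁻ z, F z w) = ∫⁻ y, T y * Ge y * Ge w + T w * (Ge y * Ge w) := h
        _ = (∫⁻ y, T y * Ge y * Ge w) + ∫⁻ y, T w * (Ge y * Ge w) :=
            lintegral_add_left ((hTm.mul hGe).mul measurable_const) _
        _ = I * Ge w + T w * (NG * Ge w) := by
            rw [lintegral_mul_const _ (show Measurable fun y => T y * Ge y from hTm.mul hGe),
              lintegral_const_mul _ (show Measurable fun y => Ge y * Ge w from hGe.mul measurable_const),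
              lintegral_mul_const _ hGe]
    calc (∫⁻ w, ∫⁻ z, F z w) = ∫⁻ w, I * Ge w + T w * (NG * Ge w) :=
          lintegral_congr inner
      _ = (∫⁻ w, I * Ge w) + ∫⁻ w, T w * (NG * Ge w) :=
          lintegral_add_left (measurable_const.mul hGe) _
      _ = I * NG + NG * I := by
          rw [lintegral_const_mul _ hGe]
          congr 1
          calc (∫⁻ w, T w * (NG * Ge w)) = ∫⁻ w, NG * (T w * Ge w) := by
                refine lintegral_congr fun w => by ring
            _ = NG * I := lintegral_const_mul _ (hTm.mul hGe)
      _ = 2 * (NG * I) := by ring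
  have hIeq : (∫⁻ z, tdiff N p u z * ENNReal.ofReal (G z)) = I := by
    refine lintegral_congr_ae ?_
    filter_upwards [hGG'] with z hz
    rw [htdiff z, hz]
  have hNGeq : ENNReal.ofReal (∫ x, G x) = NG := by
    rw [MeasureTheory.ofReal_integral_eq_lintegral_ofReal hG1 (ae_of_all _ hG0)]
    refine lintegral_congr_ae ?_
    filter_upwards [hGG'] with x hx
    rw [hx]
  have h2p : ENNReal.ofReal (2 ^ p) = c * 2 := by
    rw [← ENNReal.ofReal_rpow_of_pos (by norm_num : (0:ℝ) < 2)]
    have : ENNReal.ofReal 2 = (2 : ℝ≥0∞) := by norm_num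
    rw [this, hc, show p = (p - 1) + 1 by ring,
      ENNReal.rpow_add _ _ two_ne_zero ENNReal.ofNat_ne_top, ENNReal.rpow_one]
    ring_nf
  calc (∫⁻ z, tdiff N p u z * ENNReal.ofReal (∫ w, G (z - w) * G w))
      ≤ ∫⁻ z, ∫⁻ w, T z * (Ge (z - w) * Ge w) := lintegral_mono key
    _ ≤ ∫⁻ z, ∫⁻ w, c * F z w := by
        refine lintegral_mono fun z => lintegral_mono fun w => ?_
        calc T z * (Ge (z - w) * Ge w)
            ≤ (c * (T (z - w) + T w)) * (Ge (z - w) * Ge w) :=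
              mul_le_mul_left (hbound z w) _
          _ = c * F z w := by rw [hF]; ring
    _ = c * ∫⁻ z, ∫⁻ w, F z w := by
        have hFm1 : Measurable fun z : Euc N => ∫⁻ w, F z w := hFm.lintegral_prod_right'
        have hFzm : ∀ z : Euc N, Measurable fun w : Euc N => F z w := by
          intro z
          have h1 : Measurable fun w : Euc N => z - w := measurable_const.sub measurable_id
          exact (((hTm.comp h1).mul (hGe.comp h1)).mul hGe).add
            (hTm.mul ((hGe.comp h1).mul hGe))
        rw [← lintegral_const_mul c hFm1]
        refine lintegral_congr fun z => ?_
        exact lintegral_const_mul c (hFzm z)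
    _ = c * (2 * (NG * I)) := by rw [hJ]
    _ = ENNReal.ofReal (2 ^ p) * ENNReal.ofReal (∫ x, G x) *
        ∫⁻ z, tdiff N p u z * ENNReal.ofReal (G z) := by
        rw [hIeq, hNGeq, h2p]; ring

end Statements
end

section
/- Let N ≥ 1, p ∈ [1,∞), and let (ρ_t)_{t∈(0,1)} be non-negative functions in L¹_loc(ℝ^N). Assume that for every ε > 0 there exists δ ∈ (0,1] such that ρ_t(z)/|z|^p ≥ 1/(ε δ^N) for a.e. z ∈ B_δ and every t ∈ (0,δ). Then for every ε > 0 there exists δ > 0 such that, setting η_δ = χ_{B_δ}/|B_δ|, one has ‖η_δ * u − u‖_{L^p}^p ≤ (ε/|B_1|) ℱ_{t,p}(u) for every t ∈ (0,δ) and every u ∈ L^p(ℝ^N). -/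
open MeasureTheory Filter Topology Metric
open scoped ENNReal NNReal RealInnerProductSpace

section Statements

/-- Jensen-type inequality for `lintegral` and `rpow`. -/
lemma jensen_lint {α : Type*} [MeasurableSpace α] (μ : Measure α) {p : ℝ} (hp : 1 ≤ p)
    {f : α → ℝ≥0∞} (hf : AEMeasurable f μ) :
    (∫⁻ a, f a ∂μ) ^ p ≤ μ Set.univ ^ (p - 1) * ∫⁻ a, f a ^ p ∂μ := by
  rcases eq_or_lt_of_le hp with h1 | h1
  · simp [← h1]
  · have hpq : p.HolderConjugate (Real.conjExponent p) := Real.HolderConjugate.conjExponent h1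
    have h := ENNReal.lintegral_mul_le_Lp_mul_Lq μ hpq hf
      (aemeasurable_const (b := (1:ℝ≥0∞)))
    simp only [Pi.mul_apply, mul_one, ENNReal.one_rpow, lintegral_one, lintegral_const,
      one_mul] at h
    have hp0 : (0:ℝ) ≤ p := by linarith
    have hpne : p ≠ 0 := by linarith
    have hpm1 : p - 1 ≠ 0 := by linarith
    calc (∫⁻ a, f a ∂μ) ^ p
        ≤ ((∫⁻ a, f a ^ p ∂μ) ^ (1/p) * μ Set.univ ^ (1/(Real.conjExponent p))) ^ p :=
          ENNReal.rpow_le_rpow h hp0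
      _ = (∫⁻ a, f a ^ p ∂μ) * μ Set.univ ^ (p - 1) := by
          rw [ENNReal.mul_rpow_of_nonneg _ _ hp0, ← ENNReal.rpow_mul, ← ENNReal.rpow_mul,
            one_div, inv_mul_cancel₀ hpne, ENNReal.rpow_one]
          congr 1
          rw [Real.conjExponent]
          field_simp
      _ = _ := mul_comm _ _

/-- **Mollification estimate (Lemma 5.1).**
Under the non-degeneracy condition on the kernels, for every `ε > 0` there is `δ > 0` such
that `‖η_δ * u - u‖_{L^p}^p ≤ (ε/|B_1|) ℱ_{t,p}(u)` for every `t ∈ (0,δ)` and every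
`u ∈ L^p(ℝ^N)`, where `η_δ = χ_{B_δ}/|B_δ|`. -/
theorem mollification_estimate
    (N : ℕ) (hN : 1 ≤ N) (p : ℝ) (hp : 1 ≤ p)
    (ρ : ℝ → Euc N → ℝ)
    (hρ0 : ∀ t ∈ Set.Ioo (0:ℝ) 1, ∀ x, 0 ≤ ρ t x)
    (hρloc : ∀ t ∈ Set.Ioo (0:ℝ) 1, LocallyIntegrable (ρ t) volume)
    (hlow : ∀ ε : ℝ, 0 < ε → ∃ δ : ℝ, δ ∈ Set.Ioc (0:ℝ) 1 ∧ ∀ t ∈ Set.Ioo (0:ℝ) δ,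
      ∀ᵐ z ∂(volume.restrict (Metric.ball (0 : Euc N) δ)),
        1 / (ε * δ ^ N) ≤ ρ t z / ‖z‖ ^ p) :
    ∀ ε : ℝ, 0 < ε → ∃ δ : ℝ, 0 < δ ∧ ∀ t ∈ Set.Ioo (0:ℝ) δ,
      ∀ u : Euc N → ℝ, MemLp u (ENNReal.ofReal p) volume →
        (∫⁻ x, ENNReal.ofReal
            (|(volume (Metric.ball (0 : Euc N) δ)).toReal⁻¹ *
                (∫ y in Metric.ball (0 : Euc N) δ, u (x - y)) - u x| ^ p)) ≤
          ENNReal.ofReal (ε / (volume (Metric.ball (0 : Euc N) 1)).toReal) *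
            Fz N p (ρ t) u := by
  intro ε hε
  obtain ⟨δ, hδ, hbound⟩ := hlow ε hε
  have hδ0 : (0:ℝ) < δ := hδ.1
  refine ⟨δ, hδ0, ?_⟩
  intro t ht u hu
  have hp0 : (0:ℝ) ≤ p := by linarith
  set q : ℝ≥0∞ := ENNReal.ofReal p with hqdef
  have hq1 : 1 ≤ q := by rw [hqdef]; exact ENNReal.one_le_ofReal.mpr hp
  set B : Set (Euc N) := Metric.ball (0 : Euc N) δ with hBdef
  -- replace u by a measurable representative v
  obtain ⟨v, hv_meas, hv_ae⟩ : ∃ v : Euc N → ℝ, StronglyMeasurable v ∧ u =ᵐ[volume] v :=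
    ⟨hu.1.mk u, hu.1.stronglyMeasurable_mk, hu.1.ae_eq_mk⟩
  have hv : Measurable v := hv_meas.measurable
  have hvLp : MemLp v q volume := hu.ae_eq hv_ae
  have hinner : ∀ x : Euc N, (∫ y in B, u (x - y)) = ∫ y in B, v (x - y) := by
    intro x
    have hqmp : Measure.QuasiMeasurePreserving (fun y : Euc N => x - y) volume volume :=
      (Measure.measurePreserving_sub_left volume x).quasiMeasurePreserving
    have h := hqmp.ae_eq_comp hv_ae
    refine integral_congr_ae ?_
    have h2 : (fun y : Euc N => u (x - y)) =ᵐ[volume] (fun y => v (x - y)) := by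
      simpa [Function.comp_def] using h
    exact h2.filter_mono (ae_mono Measure.restrict_le_self)
  have hLHS : (∫⁻ x, ENNReal.ofReal
        (|(volume (Metric.ball (0 : Euc N) δ)).toReal⁻¹ *
            (∫ y in Metric.ball (0 : Euc N) δ, u (x - y)) - u x| ^ p))
      = ∫⁻ x, ENNReal.ofReal
        (|(volume B).toReal⁻¹ * (∫ y in B, v (x - y)) - v x| ^ p) := by
    refine lintegral_congr_ae ?_
    filter_upwards [hv_ae] with x hx
    rw [hinner x, hx]
  have htdiff : ∀ z : Euc N, tdiff N p u z = tdiff N p v z := by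
    intro z
    have h1 := ((measurePreserving_add_right volume z).quasiMeasurePreserving).ae_eq_comp hv_ae
    have h2 : (fun x : Euc N => u (x + z)) =ᵐ[volume] (fun x => v (x + z)) := by
      simpa [Function.comp_def] using h1
    unfold tdiff
    refine lintegral_congr_ae ?_
    filter_upwards [h2, hv_ae] with x hx1 hx2
    rw [hx1, hx2]
  have hFz : Fz N p (ρ t) u = Fz N p (ρ t) v := by
    unfold Fz
    exact lintegral_congr fun z => by rw [htdiff z]
  rw [hLHS, hFz]
  -- now everything is about the measurable function v
  have hμB_pos : 0 < volume B := measure_ball_pos volume 0 hδ0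
  have hμB_top : volume B ≠ ⊤ := measure_ball_lt_top.ne
  set c : ℝ := (volume B).toReal with hcdef
  have hc_pos : 0 < c := ENNReal.toReal_pos hμB_pos.ne' hμB_top
  haveI : Fact ((volume : Measure (Euc N)) B < ⊤) := ⟨measure_ball_lt_top⟩
  -- integrability of translates on B
  have hint : ∀ x : Euc N, Integrable (fun y => v (x - y)) (volume.restrict B) := by
    intro x
    have hmp : MeasurePreserving (fun y : Euc N => x - y) volume volume :=
      Measure.measurePreserving_sub_left volume x
    have hmemv : MemLp (fun y => v (x - y)) q volume := by
      refine ⟨(hv.comp (measurable_const.sub measurable_id)).aestronglyMeasurable, ?_⟩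
      have : (fun y : Euc N => v (x - y)) = v ∘ (fun y => x - y) := rfl
      rw [this, eLpNorm_comp_measurePreserving hvLp.1 hmp]
      exact hvLp.2
    exact (hmemv.restrict B).integrable hq1
  have hdiffint : ∀ x : Euc N,
      Integrable (fun y => v (x - y) - v x) (volume.restrict B) := fun x =>
    (hint x).sub (integrable_const _)
  -- pointwise (Jensen) bound
  have key : ∀ x : Euc N, ENNReal.ofReal (|c⁻¹ * (∫ y in B, v (x - y)) - v x| ^ p)
      ≤ (volume B)⁻¹ * ∫⁻ y in B, ENNReal.ofReal (|v (x - y) - v x| ^ p) := by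
    intro x
    have hsplit : c⁻¹ * (∫ y in B, v (x - y)) - v x
        = c⁻¹ * ∫ y in B, (v (x - y) - v x) := by
      rw [integral_sub (hint x) (integrable_const _), integral_const,
        measureReal_restrict_apply_univ, measureReal_def, smul_eq_mul, ← hcdef, mul_sub,
        ← mul_assoc, inv_mul_cancel₀ hc_pos.ne', one_mul]
    have habs : |c⁻¹ * ∫ y in B, (v (x - y) - v x)|
        ≤ c⁻¹ * ∫ y in B, |v (x - y) - v x| := by
      rw [abs_mul, abs_of_nonneg (inv_nonneg.mpr hc_pos.le)]
      refine mul_le_mul_of_nonneg_left ?_ (inv_nonneg.mpr hc_pos.le)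
      simpa [Real.norm_eq_abs] using
        norm_integral_le_integral_norm (μ := volume.restrict B) (fun y => v (x - y) - v x)
    have hr0 : (0:ℝ) ≤ ∫ y in B, |v (x - y) - v x| :=
      integral_nonneg fun y => abs_nonneg _
    have hmeasy : AEMeasurable (fun y => ENNReal.ofReal (|v (x - y) - v x|))
        (volume.restrict B) :=
      (((hv.comp (measurable_const.sub measurable_id)).sub measurable_const).abs.ennreal_ofReal
        ).aemeasurable
    have hconst : (ENNReal.ofReal c⁻¹) ^ p * volume B ^ (p - 1) = (volume B)⁻¹ := by
      rw [ENNReal.ofReal_inv_of_pos hc_pos, hcdef, ENNReal.ofReal_toReal hμB_top,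
        ENNReal.inv_rpow, ← ENNReal.rpow_neg,
        ← ENNReal.rpow_add _ _ hμB_pos.ne' hμB_top]
      rw [show -p + (p - 1) = -1 by ring, ENNReal.rpow_neg_one]
    calc ENNReal.ofReal (|c⁻¹ * (∫ y in B, v (x - y)) - v x| ^ p)
        ≤ ENNReal.ofReal ((c⁻¹ * ∫ y in B, |v (x - y) - v x|) ^ p) := by
          apply ENNReal.ofReal_le_ofReal
          refine Real.rpow_le_rpow (abs_nonneg _) ?_ hp0
          rw [hsplit]; exact habs
      _ = (ENNReal.ofReal c⁻¹) ^ p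
            * (ENNReal.ofReal (∫ y in B, |v (x - y) - v x|)) ^ p := by
          rw [← ENNReal.ofReal_rpow_of_nonneg
              (mul_nonneg (inv_nonneg.mpr hc_pos.le) hr0) hp0,
            ENNReal.ofReal_mul (inv_nonneg.mpr hc_pos.le),
            ENNReal.mul_rpow_of_nonneg _ _ hp0,
            ENNReal.ofReal_rpow_of_nonneg (inv_nonneg.mpr hc_pos.le) hp0,
            ENNReal.ofReal_rpow_of_nonneg hr0 hp0]
      _ = (ENNReal.ofReal c⁻¹) ^ p
            * (∫⁻ y in B, ENNReal.ofReal (|v (x - y) - v x|)) ^ p := by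
          rw [ofReal_integral_eq_lintegral_ofReal ((hdiffint x).abs)
            (Filter.Eventually.of_forall fun y => abs_nonneg _)]
      _ ≤ (ENNReal.ofReal c⁻¹) ^ p * (volume B ^ (p - 1)
            * ∫⁻ y in B, ENNReal.ofReal (|v (x - y) - v x|) ^ p) := by
          refine mul_le_mul_right ?_ _
          have h := jensen_lint (volume.restrict B) hp hmeasy
          rwa [Measure.restrict_apply_univ] at h
      _ = (volume B)⁻¹ * ∫⁻ y in B, ENNReal.ofReal (|v (x - y) - v x| ^ p) := by
          rw [← mul_assoc, hconst]
          congr 1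
          refine lintegral_congr fun y => ?_
          rw [ENNReal.ofReal_rpow_of_nonneg (abs_nonneg _) hp0]
  -- joint measurability for Tonelli
  have hmeas2 : Measurable (fun z : Euc N × Euc N =>
      ENNReal.ofReal (|v (z.1 - z.2) - v z.1| ^ p)) := by
    have h1 : Measurable fun z : Euc N × Euc N => |v (z.1 - z.2) - v z.1| :=
      ((hv.comp (measurable_fst.sub measurable_snd)).sub (hv.comp measurable_fst)).abs
    exact ((Real.continuous_rpow_const hp0).measurable.comp h1).ennreal_ofReal
  have htrans : ∀ y : Euc N,
      (∫⁻ x, ENNReal.ofReal (|v (x - y) - v x| ^ p)) = tdiff N p v y := by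
    intro y
    have hg : Measurable fun x : Euc N => ENNReal.ofReal (|v (x - y) - v x| ^ p) := by
      have h1 : Measurable fun x : Euc N => |v (x - y) - v x| :=
        ((hv.comp (measurable_id.sub measurable_const)).sub hv).abs
      exact ((Real.continuous_rpow_const hp0).measurable.comp h1).ennreal_ofReal
    have h := (measurePreserving_add_right volume y).lintegral_comp hg
    unfold tdiff
    rw [← h]
    refine lintegral_congr fun x => ?_
    have hxy : x + y - y = x := by abel
    rw [hxy, abs_sub_comm]
  have hμBinv_top : (volume B)⁻¹ ≠ ⊤ := by
    simp [hμB_pos.ne']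
  have hεδ : (0:ℝ) < ε * δ ^ N := mul_pos hε (pow_pos hδ0 N)
  have hstep : (∫⁻ y in B, tdiff N p v y)
      ≤ ENNReal.ofReal (ε * δ ^ N) * Fz N p (ρ t) v := by
    have hb := hbound t ht
    calc (∫⁻ y in B, tdiff N p v y)
        ≤ ∫⁻ y in B, ENNReal.ofReal (ε * δ ^ N)
            * (tdiff N p v y * ENNReal.ofReal (ρ t y / ‖y‖ ^ p)) := by
          refine lintegral_mono_ae ?_
          filter_upwards [hb] with y hy
          have h1 : (1:ℝ≥0∞) ≤ ENNReal.ofReal (ε * δ ^ N)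
              * ENNReal.ofReal (ρ t y / ‖y‖ ^ p) := by
            rw [← ENNReal.ofReal_mul hεδ.le]
            refine ENNReal.one_le_ofReal.mpr ?_
            calc (1:ℝ) = (ε * δ ^ N) * (1 / (ε * δ ^ N)) := by field_simp
              _ ≤ (ε * δ ^ N) * (ρ t y / ‖y‖ ^ p) :=
                  mul_le_mul_of_nonneg_left hy hεδ.le
          calc tdiff N p v y = 1 * tdiff N p v y := (one_mul _).symm
            _ ≤ (ENNReal.ofReal (ε * δ ^ N) * ENNReal.ofReal (ρ t y / ‖y‖ ^ p))
                  * tdiff N p v y := mul_le_mul_left h1 _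
            _ = ENNReal.ofReal (ε * δ ^ N)
                  * (tdiff N p v y * ENNReal.ofReal (ρ t y / ‖y‖ ^ p)) := by ring
      _ = ENNReal.ofReal (ε * δ ^ N)
            * ∫⁻ y in B, tdiff N p v y * ENNReal.ofReal (ρ t y / ‖y‖ ^ p) :=
          lintegral_const_mul' _ _ ENNReal.ofReal_ne_top
      _ ≤ ENNReal.ofReal (ε * δ ^ N) * Fz N p (ρ t) v := by
          refine mul_le_mul_right ?_ _
          unfold Fz
          exact setLIntegral_le_lintegral _ _
  have hconst2 : (volume B)⁻¹ * ENNReal.ofReal (ε * δ ^ N)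
      = ENNReal.ofReal (ε / (volume (Metric.ball (0 : Euc N) 1)).toReal) := by
    have hV1_pos : 0 < volume (Metric.ball (0 : Euc N) 1) := measure_ball_pos volume 0 one_pos
    have hV1_top : volume (Metric.ball (0 : Euc N) 1) ≠ ⊤ := measure_ball_lt_top.ne
    have hc1_pos : 0 < (volume (Metric.ball (0 : Euc N) 1)).toReal :=
      ENNReal.toReal_pos hV1_pos.ne' hV1_top
    have hμB_eq : volume B
        = ENNReal.ofReal (δ ^ N) * volume (Metric.ball (0 : Euc N) 1) := by
      rw [hBdef, Measure.addHaar_ball_of_pos volume 0 hδ0, finrank_euclideanSpace_fin]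
    have hδN : (0:ℝ) < δ ^ N := pow_pos hδ0 N
    rw [hμB_eq, ENNReal.mul_inv (Or.inl (by simpa using hδN)) (Or.inl ENNReal.ofReal_ne_top),
      ENNReal.ofReal_mul hε.le, div_eq_mul_inv,
      ENNReal.ofReal_mul hε.le, ENNReal.ofReal_inv_of_pos hc1_pos,
      ENNReal.ofReal_toReal hV1_top]
    rw [mul_comm (ENNReal.ofReal ε) (ENNReal.ofReal (δ ^ N))]
    rw [mul_comm ((ENNReal.ofReal (δ ^ N))⁻¹) ((volume (Metric.ball (0 : Euc N) 1))⁻¹)]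
    rw [mul_assoc, ← mul_assoc ((ENNReal.ofReal (δ ^ N))⁻¹), ENNReal.inv_mul_cancel
      (by simpa using hδN) ENNReal.ofReal_ne_top, one_mul, mul_comm]
  calc (∫⁻ x, ENNReal.ofReal (|(volume B).toReal⁻¹ * (∫ y in B, v (x - y)) - v x| ^ p))
      ≤ ∫⁻ x, (volume B)⁻¹ * ∫⁻ y in B, ENNReal.ofReal (|v (x - y) - v x| ^ p) :=
        lintegral_mono key
    _ = (volume B)⁻¹ * ∫⁻ x, ∫⁻ y in B, ENNReal.ofReal (|v (x - y) - v x| ^ p) :=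
        lintegral_const_mul' _ _ hμBinv_top
    _ = (volume B)⁻¹ * ∫⁻ y in B, ∫⁻ x, ENNReal.ofReal (|v (x - y) - v x| ^ p) := by
        congr 1
        exact lintegral_lintegral_swap hmeas2.aemeasurable
    _ = (volume B)⁻¹ * ∫⁻ y in B, tdiff N p v y := by
        congr 1
        exact lintegral_congr fun y => htrans y
    _ ≤ (volume B)⁻¹ * (ENNReal.ofReal (ε * δ ^ N) * Fz N p (ρ t) v) :=
        mul_le_mul_right hstep _
    _ = ((volume B)⁻¹ * ENNReal.ofReal (ε * δ ^ N)) * Fz N p (ρ t) v := by ring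
    _ = ENNReal.ofReal (ε / (volume (Metric.ball (0 : Euc N) 1)).toReal)
          * Fz N p (ρ t) v := by rw [hconst2]

end Statements
end
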